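/- arXiv:1107.1413 — 13 statements merged into one kernel-verified Lean document; each statement's English description precedes it below -/
import Mathlib

section
/- Steinberg's theorem: Let k be a field, M a monoid, V a k-vector space, and ρ : M → End_k(V) an injective (effective) linear representation. Give each tensor power V^{⊗d} (d ≥ 0) the diagonal M-action determined by m·(v₁ ⊗ ⋯ ⊗ v_d) = (m·v₁) ⊗ ⋯ ⊗ (m·v_d). Then the direct sum ⊕_{d≥0} V^{⊗d} is a faithful module: if an element a of the monoid algebra k[M] acts as zero on V^{⊗d} for every d ≥ 0, then a = 0. -/
/-!
For `c : k[M]`, the pairing `g ↦ ∑ₘ c(m) g(m)` with functions `g : M → k` vanishes on every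
product of matrix coefficients `m ↦ ∏ⱼ ψⱼ (ρ m vⱼ)`, since such a product is a matrix coefficient
of `ρ(m)^{⊗d}`; by linearity it vanishes on the algebra these products span. Injectivity of `ρ`
makes that algebra separate the points of `M`, so it contains a function that is nonzero at a
given `m₀` and zero on the rest of the support of `c`. Pairing `c` with it isolates `c(m₀)`.
-/

open Module

theorem Subalgebra.exists_ne_zero_forall_eq_zero_of_separatesPoints
    {X R : Type*} [CommRing R] [IsDomain R] {A : Subalgebra R (X → R)}
    (hA : (A : Set (X → R)).SeparatesPoints) (s : Finset X) (x : X) :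
    ∃ g ∈ A, g x ≠ 0 ∧ ∀ y ∈ s, y ≠ x → g y = 0 := by
  classical
  induction s using Finset.induction_on with
  | empty => exact ⟨1, A.one_mem, one_ne_zero, by simp⟩
  | insert y s _ ih =>
    obtain ⟨g, hgA, hgx, hgs⟩ := ih
    by_cases hyx : y = x
    · refine ⟨g, hgA, hgx, fun z hz hzx => hgs z ?_ hzx⟩
      simpa [hyx, hzx] using hz
    obtain ⟨f, hfA, hf⟩ := hA hyx
    refine ⟨g * (f - algebraMap R (X → R) (f y)), mul_mem hgA (sub_mem hfA (A.algebraMap_mem _)),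
      by simp [hgx, sub_eq_zero, Ne.symm hf], fun z hz hzx => ?_⟩
    rcases Finset.mem_insert.mp hz with rfl | hz
    · simp
    · simp [hgs z hz hzx]

section MatrixCoefficients

variable {k M V : Type*} [Field k] [AddCommGroup V] [Module k V]

def matrixCoeffProducts (ρ : M → End k V) : Submonoid (M → k) where
  carrier := {g | ∃ (d : ℕ) (ψ : Fin d → Dual k V) (v : Fin d → V),
    g = fun m => ∏ j, ψ j (ρ m (v j))}
  one_mem' := ⟨0, ![], ![], by ext; simp⟩
  mul_mem' := by
    rintro _ _ ⟨d, ψ, v, rfl⟩ ⟨e, φ, w, rfl⟩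
    refine ⟨d + e, Fin.append ψ φ, Fin.append v w, funext fun m => ?_⟩
    simp [Fin.prod_univ_add]

theorem Finsupp.sum_mul_prod_dual_apply_eq_zero {c : M →₀ k} {ρ : M → End k V} {d : ℕ}
    (hc : c.sum (fun m r => r • PiTensorProduct.map fun _ : Fin d => ρ m) = 0)
    (ψ : Fin d → Dual k V) (v : Fin d → V) :
    c.sum (fun m r => r * ∏ j, ψ j (ρ m (v j))) = 0 := by
  let L := PiTensorProduct.lift ((MultilinearMap.mkPiAlgebra k (Fin d) k).compLinearMap ψ)
  simpa [Finsupp.sum, map_sum, PiTensorProduct.map_tprod, L] using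
    congrArg (fun f => L (f (PiTensorProduct.tprod k v))) hc

theorem Finsupp.sum_mul_eq_zero_of_mem_adjoin_matrixCoeffProducts {c : M →₀ k}
    {ρ : M → End k V}
    (hc : ∀ d : ℕ, c.sum (fun m r => r • PiTensorProduct.map fun _ : Fin d => ρ m) = 0)
    {g : M → k} (hg : g ∈ Algebra.adjoin k (matrixCoeffProducts ρ : Set (M → k))) :
    c.sum (fun m r => r * g m) = 0 := by
  rw [← Subalgebra.mem_toSubmodule, Algebra.adjoin_eq_span, Submonoid.closure_eq] at hg
  induction hg using Submodule.span_induction with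
  | mem g hg =>
    obtain ⟨d, ψ, v, rfl⟩ := hg
    exact sum_mul_prod_dual_apply_eq_zero (hc d) ψ v
  | zero => simp
  | add g h _ _ hg hh => simp [mul_add, Finsupp.sum_add, hg, hh]
  | smul r g _ hg =>
    simp only [Pi.smul_apply, smul_eq_mul, mul_left_comm _ r]
    rw [← Finsupp.mul_sum, hg, mul_zero]

theorem separatesPoints_adjoin_matrixCoeffProducts {ρ : M → End k V}
    (hρ : Function.Injective ρ) :
    (Algebra.adjoin k (matrixCoeffProducts ρ : Set (M → k)) : Set (M → k)).SeparatesPoints := by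
  intro x y hxy
  obtain ⟨w, hw⟩ : ∃ w, ρ x w ≠ ρ y w := not_forall.mp fun h => hxy (hρ (LinearMap.ext h))
  obtain ⟨ψ, hψ⟩ := Projective.exists_dual_ne_zero k (sub_ne_zero.mpr hw)
  refine ⟨fun m => ψ (ρ m w), Algebra.subset_adjoin ⟨1, ![ψ], ![w], by simp⟩, ?_⟩
  simpa [sub_eq_zero] using hψ

end MatrixCoefficients

/-- **Steinberg's theorem.** If `ρ : M → End_k(V)` is an effective (injective)
representation of a monoid `M`, then the direct sum of all tensor powers
`V^{⊗ d}` with the diagonal `M`-action is a faithful module: any element of the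
monoid algebra `k[M]` acting as zero on every tensor power is zero. -/
theorem steinberg_faithful_tensor_powers
    {k : Type*} [Field k] {M : Type*} [Monoid M]
    {V : Type*} [AddCommGroup V] [Module k V]
    (ρ : M →* Module.End k V) (hρ : Function.Injective ρ)
    (a : MonoidAlgebra k M)
    (ha : ∀ d : ℕ,
      a.coeff.sum (fun m c =>
        c • PiTensorProduct.map (fun _ : Fin d => (ρ m : V →ₗ[k] V))) = 0) :
    a = 0 := by
  ext m₀
  obtain ⟨g, hgA, hg₀, hg⟩ := Subalgebra.exists_ne_zero_forall_eq_zero_of_separatesPoints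
    (separatesPoints_adjoin_matrixCoeffProducts hρ) a.coeff.support m₀
  have hpair := Finsupp.sum_mul_eq_zero_of_mem_adjoin_matrixCoeffProducts ha hgA
  rw [Finsupp.sum, Finset.sum_eq_single m₀ (fun m hm hne => by rw [hg m hm hne, mul_zero])
    (fun h => by rw [Finsupp.notMem_support_iff.mp h, zero_mul])] at hpair
  simpa using (mul_eq_zero.mp hpair).resolve_right hg₀
end

section
/- Let k be a field and M a finite monoid. Let I ⊆ M be the minimal two-sided ideal of M, i.e. a nonempty subset with M·I ⊆ I and I·M ⊆ I that is contained in every nonempty two-sided ideal of M (such I exists and is unique since M is finite). Assume that either I is not a group under the multiplication of M, or I is a group and the characteristic of k does not divide |I|. Then the effective dimension of M over k is at most |M| − 1. -/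
/-- The minimal two-sided ideal of a finite monoid `M`. -/
def IsMinimalIdeal {M : Type*} [Monoid M] (I : Set M) : Prop :=
  I.Nonempty ∧ (∀ m : M, ∀ i ∈ I, m * i ∈ I ∧ i * m ∈ I) ∧
    ∀ J : Set M, J.Nonempty → (∀ m : M, ∀ j ∈ J, m * j ∈ J ∧ j * m ∈ J) → I ⊆ J

/-- `I` is a group under the multiplication of `M`. -/
def IsGroupSubset {M : Type*} [Monoid M] (I : Set M) : Prop :=
  ∃ e ∈ I, (∀ a ∈ I, e * a = a ∧ a * e = a) ∧
    ∀ a ∈ I, ∃ b ∈ I, a * b = e ∧ b * a = e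

section Aux
variable {M : Type*} [Monoid M] [Fintype M]

/-- In a finite monoid every element has an idempotent positive power. -/
lemma exists_idem_pow (x : M) : ∃ N, 0 < N ∧ x ^ N * x ^ N = x ^ N := by
  obtain ⟨i, j, hij, hpow⟩ := Finite.exists_ne_map_eq_of_infinite (fun n : ℕ => x ^ n)
  wlog hlt : i < j generalizing i j
  · exact this j i (Ne.symm hij) hpow.symm (by omega)
  set d := j - i with hd
  have hdpos : 0 < d := by omega
  have hbase : x ^ i = x ^ (i + d) := by
    have : j = i + d := by omega
    rw [← this]; exact hpow
  have key : ∀ a, i ≤ a → x ^ a = x ^ (a + d) := by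
    intro a ha
    obtain ⟨c, rfl⟩ := Nat.exists_eq_add_of_le ha
    calc x ^ (i + c) = x ^ i * x ^ c := by rw [pow_add]
    _ = x ^ (i + d) * x ^ c := by rw [hbase]
    _ = x ^ (i + c + d) := by rw [← pow_add]; ring_nf
  have key2 : ∀ b a, i ≤ a → x ^ (a + b * d) = x ^ a := by
    intro b
    induction b with
    | zero => simp
    | succ n ih =>
      intro a ha
      have h : a + (n+1) * d = (a + d) + n * d := by ring
      rw [h, ih (a+d) (by omega), ← key a ha]
  refine ⟨d * (i + 1), by positivity, ?_⟩
  rw [← pow_add]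
  have h : d * (i+1) + d * (i+1) = d * (i+1) + (i+1) * d := by ring
  rw [h, key2 (i+1) (d * (i+1)) (by nlinarith)]

variable {I : Set M}

lemma ideal_mul_left (hI : IsMinimalIdeal I) {a : M} (ha : a ∈ I) (m : M) : m * a ∈ I :=
  (hI.2.1 m a ha).1

lemma ideal_mul_right (hI : IsMinimalIdeal I) {a : M} (ha : a ∈ I) (m : M) : a * m ∈ I :=
  (hI.2.1 m a ha).2

lemma ideal_pow_mem (hI : IsMinimalIdeal I) {a : M} (ha : a ∈ I) {N : ℕ} (hN : 0 < N) :
    a ^ N ∈ I := by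
  obtain ⟨N', rfl⟩ := Nat.exists_eq_add_of_lt hN
  clear hN
  induction N' with
  | zero => simpa using ha
  | succ n ih => rw [pow_succ]; exact ideal_mul_right hI ih a

/-- Recovery: for `x` in the minimal ideal, `x` is a right multiple of `x*m`. -/
lemma recover_right (hI : IsMinimalIdeal I) {x : M} (hx : x ∈ I) (m : M) :
    ∃ q, x * m * q = x := by
  classical
  set J : Set M := {y | ∃ p q, p * (x * m) * q = y} with hJ
  have hJne : J.Nonempty := ⟨x * m, 1, 1, by simp⟩
  have hJid : ∀ a : M, ∀ j ∈ J, a * j ∈ J ∧ j * a ∈ J := by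
    rintro a j ⟨p, q, rfl⟩
    exact ⟨⟨a * p, q, by simp [mul_assoc]⟩, ⟨p, q * a, by simp [mul_assoc]⟩⟩
  obtain ⟨p, q, hpq⟩ := hI.2.2 J hJne hJid hx
  have h1 : p * (x * (m * q)) = x := by
    calc p * (x * (m * q)) = p * (x * m) * q := by simp [mul_assoc]
    _ = x := hpq
  set r := m * q with hr
  have key : ∀ j : ℕ, p ^ j * (x * r ^ j) = x := by
    intro j
    induction j with
    | zero => simp
    | succ n ih =>
      calc p ^ (n+1) * (x * r ^ (n+1))
          = p ^ n * (p * (x * r) * r ^ n) := by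
            rw [pow_succ, pow_succ']; simp [mul_assoc]
      _ = p ^ n * (x * r ^ n) := by rw [h1]
      _ = x := ih
  obtain ⟨N, hN, hNid⟩ := exists_idem_pow r
  have h2 : x * r ^ N = x := by
    calc x * r ^ N = p ^ N * (x * r ^ N) * r ^ N := by rw [key N]
    _ = p ^ N * (x * (r ^ N * r ^ N)) := by simp [mul_assoc]
    _ = p ^ N * (x * r ^ N) := by rw [hNid]
    _ = x := key N
  obtain ⟨N', rfl⟩ : ∃ n, N = n + 1 := ⟨N - 1, by omega⟩
  refine ⟨q * r ^ N', ?_⟩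
  calc x * m * (q * r ^ N') = x * (r * r ^ N') := by simp [hr, mul_assoc]
  _ = x * r ^ (N' + 1) := by rw [pow_succ']
  _ = x := h2

/-- Recovery: for `x` in the minimal ideal, `x` is a left multiple of `m*x`. -/
lemma recover_left (hI : IsMinimalIdeal I) {x : M} (hx : x ∈ I) (m : M) :
    ∃ p, p * (m * x) = x := by
  classical
  set J : Set M := {y | ∃ p q, p * (m * x) * q = y} with hJ
  have hJne : J.Nonempty := ⟨m * x, 1, 1, by simp⟩
  have hJid : ∀ a : M, ∀ j ∈ J, a * j ∈ J ∧ j * a ∈ J := by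
    rintro a j ⟨p, q, rfl⟩
    exact ⟨⟨a * p, q, by simp [mul_assoc]⟩, ⟨p, q * a, by simp [mul_assoc]⟩⟩
  obtain ⟨p, q, hpq⟩ := hI.2.2 J hJne hJid hx
  have h1 : (p * m) * (x * q) = x := by
    calc (p * m) * (x * q) = p * (m * x) * q := by simp [mul_assoc]
    _ = x := hpq
  set l := p * m with hl
  have key : ∀ j : ℕ, l ^ j * (x * q ^ j) = x := by
    intro j
    induction j with
    | zero => simp
    | succ n ih =>
      calc l ^ (n+1) * (x * q ^ (n+1))
          = l ^ n * (l * (x * q) * q ^ n) := by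
            rw [pow_succ, pow_succ']; simp [mul_assoc]
      _ = l ^ n * (x * q ^ n) := by rw [h1]
      _ = x := ih
  obtain ⟨N, hN, hNid⟩ := exists_idem_pow l
  have h2 : l ^ N * x = x := by
    calc l ^ N * x = l ^ N * (l ^ N * (x * q ^ N)) := by rw [key N]
    _ = (l ^ N * l ^ N) * (x * q ^ N) := by simp [mul_assoc]
    _ = l ^ N * (x * q ^ N) := by rw [hNid]
    _ = x := key N
  obtain ⟨N', rfl⟩ : ∃ n, N = n + 1 := ⟨N - 1, by omega⟩
  refine ⟨l ^ N' * p, ?_⟩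
  calc l ^ N' * p * (m * x) = (l ^ N' * l) * x := by simp [hl, mul_assoc]
  _ = l ^ (N' + 1) * x := by rw [pow_succ]
  _ = x := h2

/-- Uniqueness of idempotents absorbed by an idempotent in the minimal ideal. -/
lemma idem_eq (hI : IsMinimalIdeal I) {e g : M} (he : e ∈ I) (hg : g ∈ I)
    (hee : e * e = e) (hgg : g * g = g) (heg : e * g = g) (hge : g * e = g) : g = e := by
  obtain ⟨q, hq⟩ := recover_right hI he g
  -- hq :  e * g * q = e
  rw [heg] at hq
  -- hq : g * q = e
  have h2 : g * e = e := by rw [← hq, ← mul_assoc, hgg]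
  calc g = g * e := hge.symm
  _ = e := h2

end Aux

section Machine
open Matrix
variable {M : Type*} [Monoid M] [Fintype M] {k : Type*} [Field k]

/-- Left regular representation on `M →₀ k`. -/
noncomputable def lreg (k : Type*) [Field k] {M : Type*} [Monoid M] (s : M) :
    (M →₀ k) →ₗ[k] (M →₀ k) := Finsupp.lmapDomain k k (s * ·)

/-- Right regular (anti-)representation on `M →₀ k`. -/
noncomputable def rreg (k : Type*) [Field k] {M : Type*} [Monoid M] (s : M) :
    (M →₀ k) →ₗ[k] (M →₀ k) := Finsupp.lmapDomain k k (· * s)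

lemma lreg_single (s m : M) (c : k) :
    lreg k s (Finsupp.single m c) = Finsupp.single (s * m) c := Finsupp.mapDomain_single

lemma rreg_single (s m : M) (c : k) :
    rreg k s (Finsupp.single m c) = Finsupp.single (m * s) c := Finsupp.mapDomain_single

lemma lreg_lreg (s t : M) (u : M →₀ k) : lreg k s (lreg k t u) = lreg k (s * t) u := by
  have h : ((s * t) * ·) = (s * ·) ∘ (t * ·) := funext fun x => mul_assoc s t x
  show Finsupp.mapDomain _ (Finsupp.mapDomain _ u) = Finsupp.mapDomain _ u
  rw [h, Finsupp.mapDomain_comp]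

lemma rreg_rreg (s t : M) (u : M →₀ k) : rreg k t (rreg k s u) = rreg k (s * t) u := by
  have h : (· * (s * t)) = (· * t) ∘ (· * s) := funext fun x => (mul_assoc x s t).symm
  show Finsupp.mapDomain _ (Finsupp.mapDomain _ u) = Finsupp.mapDomain _ u
  rw [h, Finsupp.mapDomain_comp]

noncomputable instance : FiniteDimensional k (M →₀ k) :=
  Module.Finite.equiv (Finsupp.linearEquivFunOnFinite k k M).symm

lemma finrank_finsupp_card : Module.finrank k (M →₀ k) = Fintype.card M := by
  rw [(Finsupp.linearEquivFunOnFinite k k M).finrank_eq]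
  exact Module.finrank_fintype_fun_eq_card k

/-- Pad an injective multiplicative matrix representation to a larger size. -/
lemma pad_rep {d D : ℕ} (h : d ≤ D) (ψ : M → Matrix (Fin d) (Fin d) k)
    (hinj : Function.Injective ψ) (hmul : ∀ s t, ψ (s * t) = ψ s * ψ t) :
    ∃ φ : M → Matrix (Fin D) (Fin D) k,
      Function.Injective φ ∧ ∀ s t : M, φ (s * t) = φ s * φ t := by
  let E : (Fin d ⊕ Fin (D - d)) ≃ Fin D := finSumFinEquiv.trans (finCongr (by omega))
  refine ⟨fun s => (Matrix.fromBlocks (ψ s) 0 0 (0 : Matrix (Fin (D-d)) (Fin (D-d)) k)).submatrix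
      E.symm E.symm, ?_, ?_⟩
  · intro s t hst
    apply hinj
    have h2 := congrArg (fun X : Matrix (Fin D) (Fin D) k => X.submatrix E E) hst
    simp only [Matrix.submatrix_submatrix, Equiv.symm_comp_self, Matrix.submatrix_id_id] at h2
    have := congrArg Matrix.toBlocks₁₁ h2
    simpa [Matrix.toBlocks_fromBlocks₁₁] using this
  · intro s t
    have hblock : Matrix.fromBlocks (ψ (s * t)) 0 0 (0 : Matrix (Fin (D-d)) (Fin (D-d)) k)
        = Matrix.fromBlocks (ψ s) 0 0 0 * Matrix.fromBlocks (ψ t) 0 0 0 := by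
      rw [Matrix.fromBlocks_multiply, hmul]; simp
    show (Matrix.fromBlocks (ψ (s * t)) 0 0 0).submatrix E.symm E.symm = _
    rw [hblock, ← Matrix.submatrix_mul_equiv _ _ _ E.symm _]

/-- Machine: an invariant proper-nonzero subspace of the left regular representation with
separating quotient yields a faithful representation of dimension `card M - 1`. -/
lemma machineL (W : Submodule k (M →₀ k))
    (hinv : ∀ s : M, ∀ v ∈ W, lreg k s v ∈ W)
    (hbot : W ≠ ⊥)
    (hsep : ∀ s t : M, (∀ u : M →₀ k, lreg k s u - lreg k t u ∈ W) → s = t) :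
    ∃ φ : M → Matrix (Fin (Fintype.card M - 1)) (Fin (Fintype.card M - 1)) k,
      Function.Injective φ ∧ ∀ s t : M, φ (s * t) = φ s * φ t := by
  classical
  have hcomap : ∀ s : M, W ≤ W.comap (lreg k s) := fun s v hv => hinv s v hv
  let ρQ : M → ((M →₀ k) ⧸ W) →ₗ[k] ((M →₀ k) ⧸ W) :=
    fun s => W.mapQ W (lreg k s) (hcomap s)
  have hρmul : ∀ s t : M, ρQ (s * t) = (ρQ s).comp (ρQ t) := by
    intro s t
    apply Submodule.linearMap_qext
    apply LinearMap.ext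
    intro u
    simp only [LinearMap.comp_apply, Submodule.mkQ_apply, Submodule.mapQ_apply, ρQ]
    rw [lreg_lreg]
  have hd : Module.finrank k ((M →₀ k) ⧸ W) ≤ Fintype.card M - 1 := by
    have h1 := Submodule.finrank_quotient_add_finrank W
    rw [finrank_finsupp_card] at h1
    have h2 : Module.finrank k W ≠ 0 := fun h0 => hbot (Submodule.finrank_eq_zero.mp h0)
    omega
  let b := Module.finBasis k ((M →₀ k) ⧸ W)
  let ψ : M → Matrix (Fin (Module.finrank k ((M →₀ k) ⧸ W)))
      (Fin (Module.finrank k ((M →₀ k) ⧸ W))) k := fun s => LinearMap.toMatrix b b (ρQ s)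
  have hψmul : ∀ s t, ψ (s * t) = ψ s * ψ t := by
    intro s t
    show LinearMap.toMatrix b b (ρQ (s*t)) = _
    rw [hρmul s t, LinearMap.toMatrix_comp b b b]
  have hψinj : Function.Injective ψ := by
    intro s t hst
    have hQ : ρQ s = ρQ t := (LinearMap.toMatrix b b).injective hst
    apply hsep
    intro u
    have := congrArg (fun f : ((M →₀ k) ⧸ W) →ₗ[k] ((M →₀ k) ⧸ W) =>
      f (Submodule.Quotient.mk u)) hQ
    simp only [Submodule.mapQ_apply, ρQ] at this
    exact (Submodule.Quotient.eq W).mp this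
  exact pad_rep hd ψ hψinj hψmul

/-- Right-handed machine: same with the right regular anti-representation, transposing. -/
lemma machineR (W : Submodule k (M →₀ k))
    (hinv : ∀ s : M, ∀ v ∈ W, rreg k s v ∈ W)
    (hbot : W ≠ ⊥)
    (hsep : ∀ s t : M, (∀ u : M →₀ k, rreg k s u - rreg k t u ∈ W) → s = t) :
    ∃ φ : M → Matrix (Fin (Fintype.card M - 1)) (Fin (Fintype.card M - 1)) k,
      Function.Injective φ ∧ ∀ s t : M, φ (s * t) = φ s * φ t := by
  classical
  have hcomap : ∀ s : M, W ≤ W.comap (rreg k s) := fun s v hv => hinv s v hv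
  let ρQ : M → ((M →₀ k) ⧸ W) →ₗ[k] ((M →₀ k) ⧸ W) :=
    fun s => W.mapQ W (rreg k s) (hcomap s)
  have hρmul : ∀ s t : M, ρQ (s * t) = (ρQ t).comp (ρQ s) := by
    intro s t
    apply Submodule.linearMap_qext
    apply LinearMap.ext
    intro u
    simp only [LinearMap.comp_apply, Submodule.mkQ_apply, Submodule.mapQ_apply, ρQ]
    rw [rreg_rreg]
  have hd : Module.finrank k ((M →₀ k) ⧸ W) ≤ Fintype.card M - 1 := by
    have h1 := Submodule.finrank_quotient_add_finrank W
    rw [finrank_finsupp_card] at h1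
    have h2 : Module.finrank k W ≠ 0 := fun h0 => hbot (Submodule.finrank_eq_zero.mp h0)
    omega
  let b := Module.finBasis k ((M →₀ k) ⧸ W)
  let ψ : M → Matrix (Fin (Module.finrank k ((M →₀ k) ⧸ W)))
      (Fin (Module.finrank k ((M →₀ k) ⧸ W))) k :=
    fun s => (LinearMap.toMatrix b b (ρQ s))ᵀ
  have hψmul : ∀ s t, ψ (s * t) = ψ s * ψ t := by
    intro s t
    show (LinearMap.toMatrix b b (ρQ (s*t)))ᵀ = _
    rw [hρmul s t, LinearMap.toMatrix_comp b b b, Matrix.transpose_mul]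
  have hψinj : Function.Injective ψ := by
    intro s t hst
    have hQ : ρQ s = ρQ t := (LinearMap.toMatrix b b).injective (Matrix.transpose_inj.mp hst)
    apply hsep
    intro u
    have := congrArg (fun f : ((M →₀ k) ⧸ W) →ₗ[k] ((M →₀ k) ⧸ W) =>
      f (Submodule.Quotient.mk u)) hQ
    simp only [Submodule.mapQ_apply, ρQ] at this
    exact (Submodule.Quotient.eq W).mp this
  exact pad_rep hd ψ hψinj hψmul

end Machine

section Cases
variable {M : Type*} [Monoid M] [Fintype M] {k : Type*} [Field k] {I : Set M}

/-- If `s*x = t*x` for `s,t` in the minimal ideal fixed by right mult by the idempotent `e`,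
then `s = t`. -/
lemma left_sep (hI : IsMinimalIdeal I) {e s t : M} (he : e ∈ I) (hee : e * e = e)
    (hs : s ∈ I) (ht : t ∈ I) (hse : s * e = s) (hte : t * e = t)
    (x : M) (hx : s * x = t * x) : s = t := by
  obtain ⟨q, hq⟩ := recover_right hI ht x
  -- hq : t * x * q = t
  set r := x * q with hr
  have hsr : s * r = t := by rw [hr, ← mul_assoc, hx, mul_assoc, ← hr, hr, ← mul_assoc, hq]
  have htr : t * r = t := by rw [hr, ← mul_assoc, hq]
  set μ := e * (r * e) with hμ
  have hμI : μ ∈ I := ideal_mul_right hI he (r * e)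
  have hμe : μ * e = μ := by rw [hμ]; simp only [mul_assoc, hee]
  have heμ : e * μ = μ := by rw [hμ, ← mul_assoc, hee]
  have hsμ : s * μ = t := by
    calc s * μ = ((s * e) * r) * e := by rw [hμ]; simp [mul_assoc]
    _ = (s * r) * e := by rw [hse]
    _ = t := by rw [hsr, hte]
  have htμ : t * μ = t := by
    calc t * μ = ((t * e) * r) * e := by rw [hμ]; simp [mul_assoc]
    _ = (t * r) * e := by rw [hte]
    _ = t := by rw [htr, hte]
  have hpow : ∀ j : ℕ, s * μ ^ (j + 1) = t := by
    intro j
    induction j with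
    | zero => simpa using hsμ
    | succ n ih =>
      rw [pow_succ, ← mul_assoc, ih, htμ]
  obtain ⟨N, hN, hNid⟩ := exists_idem_pow μ
  obtain ⟨N', rfl⟩ : ∃ n, N = n + 1 := ⟨N - 1, by omega⟩
  have hμNI : μ ^ (N' + 1) ∈ I := ideal_pow_mem hI hμI hN
  have heμN : e * μ ^ (N' + 1) = μ ^ (N' + 1) := by
    rw [pow_succ', ← mul_assoc, heμ]
  have hμNe : μ ^ (N' + 1) * e = μ ^ (N' + 1) := by
    rw [pow_succ, mul_assoc, hμe]
  have hμNeq : μ ^ (N' + 1) = e := idem_eq hI he hμNI hee hNid heμN hμNe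
  have := hpow N'
  rw [hμNeq, hse] at this
  exact this

/-- Mirror of `left_sep`. -/
lemma right_sep (hI : IsMinimalIdeal I) {e s t : M} (he : e ∈ I) (hee : e * e = e)
    (hs : s ∈ I) (ht : t ∈ I) (hse : e * s = s) (hte : e * t = t)
    (x : M) (hx : x * s = x * t) : s = t := by
  obtain ⟨q, hq⟩ := recover_left hI ht x
  -- hq : q * (x * t) = t
  set r := q * x with hr
  have hsr : r * s = t := by rw [hr, mul_assoc, hx, hq]
  have htr : r * t = t := by rw [hr, mul_assoc, hq]
  set μ := (e * r) * e with hμ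
  have hμI : μ ∈ I := ideal_mul_right hI (ideal_mul_right hI he r) e
  have hμe : μ * e = μ := by rw [hμ, mul_assoc, hee]
  have heμ : e * μ = μ := by rw [hμ]; simp only [← mul_assoc, hee]
  have hsμ : μ * s = t := by
    calc μ * s = e * (r * (e * s)) := by rw [hμ]; simp [mul_assoc]
    _ = e * (r * s) := by rw [hse]
    _ = t := by rw [hsr, hte]
  have htμ : μ * t = t := by
    calc μ * t = e * (r * (e * t)) := by rw [hμ]; simp [mul_assoc]
    _ = e * (r * t) := by rw [hte]
    _ = t := by rw [htr, hte]
  have hpow : ∀ j : ℕ, μ ^ (j + 1) * s = t := by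
    intro j
    induction j with
    | zero => simpa using hsμ
    | succ n ih =>
      rw [pow_succ', mul_assoc, ih, htμ]
  obtain ⟨N, hN, hNid⟩ := exists_idem_pow μ
  obtain ⟨N', rfl⟩ : ∃ n, N = n + 1 := ⟨N - 1, by omega⟩
  have hμNI : μ ^ (N' + 1) ∈ I := ideal_pow_mem hI hμI hN
  have heμN : e * μ ^ (N' + 1) = μ ^ (N' + 1) := by
    rw [pow_succ', ← mul_assoc, heμ]
  have hμNe : μ ^ (N' + 1) * e = μ ^ (N' + 1) := by
    rw [pow_succ, mul_assoc, hμe]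
  have hμNeq : μ ^ (N' + 1) = e := idem_eq hI he hμNI hee hNid heμN hμNe
  have := hpow N'
  rw [hμNeq, hse] at this
  exact this

lemma right_fix_back (hI : IsMinimalIdeal I) {x : M} (hx : x ∈ I) (s e : M)
    (h : (s * x) * e = s * x) : x * e = x := by
  obtain ⟨p, hp⟩ := recover_left hI hx s
  calc x * e = p * (s * x) * e := by rw [hp]
  _ = p * ((s * x) * e) := by rw [mul_assoc]
  _ = p * (s * x) := by rw [h]
  _ = x := hp

lemma left_fix_back (hI : IsMinimalIdeal I) {x : M} (hx : x ∈ I) (s e : M)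
    (h : e * (x * s) = x * s) : e * x = x := by
  obtain ⟨q, hq⟩ := recover_right hI hx s
  calc e * x = e * (x * s * q) := by rw [hq]
  _ = (e * (x * s)) * q := by rw [← mul_assoc]
  _ = x * s * q := by rw [h]
  _ = x := hq

end Cases

section CaseLemmas
variable {M : Type*} [Monoid M] [Fintype M] {k : Type*} [Field k] {I : Set M}

open scoped Classical in
lemma ind_apply (F : Finset M) (y : M) :
    (∑ x ∈ F, Finsupp.single x (1:k)) y = if y ∈ F then 1 else 0 := by
  classical
  rw [Finsupp.finset_sum_apply]
  simp only [Finsupp.single_apply]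
  exact Finset.sum_ite_eq' F y (fun _ => 1)

/-- Case: some idempotent `e` of `I` is not a right identity on `I`. -/
lemma caseB2 (hI : IsMinimalIdeal I) {e c : M} (he : e ∈ I) (hee : e * e = e)
    (hc : c ∈ I) (hce : c * e ≠ c) :
    ∃ φ : M → Matrix (Fin (Fintype.card M - 1)) (Fin (Fintype.card M - 1)) k,
      Function.Injective φ ∧ ∀ s t : M, φ (s * t) = φ s * φ t := by
  classical
  set S : Set (M →₀ k) := {v | ∃ y, (y ∈ I ∧ y * e = y) ∧ v = Finsupp.single y (1:k)} with hS
  set W := Submodule.span k S with hW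
  have hinv : ∀ s : M, ∀ v ∈ W, lreg k s v ∈ W := by
    intro s v hv
    refine Submodule.span_induction (p := fun v _ => lreg k s v ∈ W) ?_ ?_ ?_ ?_ hv
    · rintro v ⟨y, ⟨hyI, hye⟩, rfl⟩
      apply Submodule.subset_span
      exact ⟨s * y, ⟨ideal_mul_left hI hyI s, by rw [mul_assoc, hye]⟩, lreg_single s y 1⟩
    · simpa using Submodule.zero_mem W
    · intro u w _ _ hu hw; rw [map_add]; exact Submodule.add_mem W hu hw
    · intro a u _ hu; rw [map_smul]; exact Submodule.smul_mem W a hu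
  have hsupp : ∀ v ∈ W, ∀ y : M, v y ≠ 0 → y ∈ I ∧ y * e = y := by
    intro v hv
    refine Submodule.span_induction (p := fun v _ => ∀ y : M, v y ≠ 0 → y ∈ I ∧ y * e = y)
      ?_ ?_ ?_ ?_ hv
    · rintro v ⟨y', ⟨hyI, hye⟩, rfl⟩ y hy
      have hyy : y' = y := by
        by_contra hne
        exact hy (by rw [Finsupp.single_apply, if_neg hne])
      subst hyy; exact ⟨hyI, hye⟩
    · intro y hy; simp at hy
    · intro u w _ _ hu hw y hy
      rw [Finsupp.add_apply] at hy
      by_cases h0 : u y = 0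
      · exact hw y (by rwa [h0, zero_add] at hy)
      · exact hu y h0
    · intro a u _ hu y hy
      rw [Finsupp.smul_apply] at hy
      exact hu y (fun h => hy (by rw [h, smul_zero]))
  have hbot : W ≠ ⊥ := by
    intro hb
    have hm : Finsupp.single e (1:k) ∈ W := Submodule.subset_span ⟨e, ⟨he, hee⟩, rfl⟩
    rw [hb, Submodule.mem_bot] at hm
    exact one_ne_zero (Finsupp.single_eq_zero.mp hm)
  have hsep : ∀ s t : M, (∀ u : M →₀ k, lreg k s u - lreg k t u ∈ W) → s = t := by
    intro s t hall
    by_contra hst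
    have hv1 : Finsupp.single s (1:k) - Finsupp.single t 1 ∈ W := by
      have := hall (Finsupp.single 1 1)
      rwa [lreg_single, lreg_single, mul_one, mul_one] at this
    have hsIe : s ∈ I ∧ s * e = s := by
      refine hsupp _ hv1 s ?_
      rw [Finsupp.sub_apply, Finsupp.single_apply, Finsupp.single_apply, if_pos rfl,
        if_neg (Ne.symm hst)]
      norm_num
    have htIe : t ∈ I ∧ t * e = t := by
      refine hsupp _ hv1 t ?_
      rw [Finsupp.sub_apply, Finsupp.single_apply, Finsupp.single_apply, if_neg hst,
        if_pos rfl]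
      norm_num
    have h6 : s * c ≠ t * c := by
      intro hcon
      exact hst (left_sep hI he hee hsIe.1 htIe.1 hsIe.2 htIe.2 c hcon)
    have h5 : (s * c) * e ≠ s * c := by
      intro hcon
      exact hce (right_fix_back hI hc s e hcon)
    have hv2 : Finsupp.single (s * c) (1:k) - Finsupp.single (t * c) 1 ∈ W := by
      have := hall (Finsupp.single c 1)
      rwa [lreg_single, lreg_single] at this
    refine h5 ((hsupp _ hv2 (s * c) ?_).2)
    rw [Finsupp.sub_apply, Finsupp.single_apply, Finsupp.single_apply, if_pos rfl,
      if_neg (Ne.symm h6)]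
    norm_num
  exact machineL W hinv hbot hsep

/-- Case: some idempotent `e` of `I` is not a left identity on `I`. -/
lemma caseA2 (hI : IsMinimalIdeal I) {e c : M} (he : e ∈ I) (hee : e * e = e)
    (hc : c ∈ I) (hec : e * c ≠ c) :
    ∃ φ : M → Matrix (Fin (Fintype.card M - 1)) (Fin (Fintype.card M - 1)) k,
      Function.Injective φ ∧ ∀ s t : M, φ (s * t) = φ s * φ t := by
  classical
  set S : Set (M →₀ k) := {v | ∃ y, (y ∈ I ∧ e * y = y) ∧ v = Finsupp.single y (1:k)} with hS
  set W := Submodule.span k S with hW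
  have hinv : ∀ s : M, ∀ v ∈ W, rreg k s v ∈ W := by
    intro s v hv
    refine Submodule.span_induction (p := fun v _ => rreg k s v ∈ W) ?_ ?_ ?_ ?_ hv
    · rintro v ⟨y, ⟨hyI, hye⟩, rfl⟩
      apply Submodule.subset_span
      exact ⟨y * s, ⟨ideal_mul_right hI hyI s, by rw [← mul_assoc, hye]⟩, rreg_single s y 1⟩
    · simpa using Submodule.zero_mem W
    · intro u w _ _ hu hw; rw [map_add]; exact Submodule.add_mem W hu hw
    · intro a u _ hu; rw [map_smul]; exact Submodule.smul_mem W a hu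
  have hsupp : ∀ v ∈ W, ∀ y : M, v y ≠ 0 → y ∈ I ∧ e * y = y := by
    intro v hv
    refine Submodule.span_induction (p := fun v _ => ∀ y : M, v y ≠ 0 → y ∈ I ∧ e * y = y)
      ?_ ?_ ?_ ?_ hv
    · rintro v ⟨y', ⟨hyI, hye⟩, rfl⟩ y hy
      have hyy : y' = y := by
        by_contra hne
        exact hy (by rw [Finsupp.single_apply, if_neg hne])
      subst hyy; exact ⟨hyI, hye⟩
    · intro y hy; simp at hy
    · intro u w _ _ hu hw y hy
      rw [Finsupp.add_apply] at hy
      by_cases h0 : u y = 0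
      · exact hw y (by rwa [h0, zero_add] at hy)
      · exact hu y h0
    · intro a u _ hu y hy
      rw [Finsupp.smul_apply] at hy
      exact hu y (fun h => hy (by rw [h, smul_zero]))
  have hbot : W ≠ ⊥ := by
    intro hb
    have hm : Finsupp.single e (1:k) ∈ W := Submodule.subset_span ⟨e, ⟨he, hee⟩, rfl⟩
    rw [hb, Submodule.mem_bot] at hm
    exact one_ne_zero (Finsupp.single_eq_zero.mp hm)
  have hsep : ∀ s t : M, (∀ u : M →₀ k, rreg k s u - rreg k t u ∈ W) → s = t := by
    intro s t hall
    by_contra hst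
    have hv1 : Finsupp.single s (1:k) - Finsupp.single t 1 ∈ W := by
      have := hall (Finsupp.single 1 1)
      rwa [rreg_single, rreg_single, one_mul, one_mul] at this
    have hsIe : s ∈ I ∧ e * s = s := by
      refine hsupp _ hv1 s ?_
      rw [Finsupp.sub_apply, Finsupp.single_apply, Finsupp.single_apply, if_pos rfl,
        if_neg (Ne.symm hst)]
      norm_num
    have htIe : t ∈ I ∧ e * t = t := by
      refine hsupp _ hv1 t ?_
      rw [Finsupp.sub_apply, Finsupp.single_apply, Finsupp.single_apply, if_neg hst,
        if_pos rfl]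
      norm_num
    have h6 : c * s ≠ c * t := by
      intro hcon
      exact hst (right_sep hI he hee hsIe.1 htIe.1 hsIe.2 htIe.2 c hcon)
    have h5 : e * (c * s) ≠ c * s := by
      intro hcon
      exact hec (left_fix_back hI hc s e hcon)
    have hv2 : Finsupp.single (c * s) (1:k) - Finsupp.single (c * t) 1 ∈ W := by
      have := hall (Finsupp.single c 1)
      rwa [rreg_single, rreg_single] at this
    refine h5 ((hsupp _ hv2 (c * s) ?_).2)
    rw [Finsupp.sub_apply, Finsupp.single_apply, Finsupp.single_apply, if_pos rfl,
      if_neg (Ne.symm h6)]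
    norm_num
  exact machineR W hinv hbot hsep

end CaseLemmas

section GroupCase
variable {M : Type*} [Monoid M] [Fintype M] {k : Type*} [Field k] {I : Set M}

/-- Case: `I` is a group and `char k` does not divide `|I|`. -/
lemma caseGroup (hI : IsMinimalIdeal I) (hgrp : IsGroupSubset I)
    (hchar : ¬ (ringChar k ∣ Nat.card I)) :
    ∃ φ : M → Matrix (Fin (Fintype.card M - 1)) (Fin (Fintype.card M - 1)) k,
      Function.Injective φ ∧ ∀ s t : M, φ (s * t) = φ s * φ t := by
  classical
  obtain ⟨ee, heeI, hid, hinv'⟩ := hgrp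
  set Ift : Finset M := Set.toFinset I with hIft
  have hmem : ∀ x : M, x ∈ Ift ↔ x ∈ I := fun x => Set.mem_toFinset
  -- left multiplications are injective on I
  have LMI : ∀ s : M, ∀ g₁ ∈ I, ∀ g₂ ∈ I, s * g₁ = s * g₂ → g₁ = g₂ := by
    intro s g₁ hg₁ g₂ hg₂ hgg
    have hq : ∀ g ∈ I, (s * ee) * g = s * g := by
      intro g hg
      rw [mul_assoc, (hid g hg).1]
    obtain ⟨b, hbI, hb1, hb2⟩ := hinv' (s * ee) (ideal_mul_left hI heeI s)
    calc g₁ = ee * g₁ := ((hid g₁ hg₁).1).symm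
    _ = (b * (s * ee)) * g₁ := by rw [hb2]
    _ = b * (s * g₁) := by rw [mul_assoc, hq g₁ hg₁]
    _ = b * (s * g₂) := by rw [hgg]
    _ = (b * (s * ee)) * g₂ := by rw [mul_assoc, hq g₂ hg₂]
    _ = ee * g₂ := by rw [hb2]
    _ = g₂ := (hid g₂ hg₂).1
  set v : M →₀ k := ∑ x ∈ Ift, Finsupp.single x (1:k) with hv
  have himg : ∀ s : M, Finset.image (fun g => s * g) Ift = Ift := by
    intro s
    apply Finset.eq_of_subset_of_card_le
    · intro y hy
      obtain ⟨g, hg, rfl⟩ := Finset.mem_image.mp hy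
      exact (hmem _).mpr (ideal_mul_left hI ((hmem _).mp hg) s)
    · rw [Finset.card_image_of_injOn
        (fun g₁ h₁ g₂ h₂ h => LMI s g₁ ((hmem _).mp h₁) g₂ ((hmem _).mp h₂) h)]
  have hlv : ∀ s : M, lreg k s v = v := by
    intro s
    rw [hv, map_sum]
    simp only [lreg_single]
    have hsi := Finset.sum_image (s := Ift) (g := fun g => s * g)
      (f := fun y => Finsupp.single y (1:k))
      (fun g₁ h₁ g₂ h₂ h => LMI s g₁ ((hmem _).mp h₁) g₂ ((hmem _).mp h₂) h)
    rw [himg s] at hsi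
    exact hsi.symm
  set W := Submodule.span k {v} with hW
  have hinv : ∀ s : M, ∀ u ∈ W, lreg k s u ∈ W := by
    intro s u hu
    obtain ⟨a, rfl⟩ := Submodule.mem_span_singleton.mp hu
    rw [map_smul, hlv]
    exact Submodule.smul_mem W a (Submodule.mem_span_singleton_self v)
  have hvee : v ee = 1 := by
    rw [hv, ind_apply, if_pos ((hmem _).mpr heeI)]
  have hbot : W ≠ ⊥ := by
    intro hb
    have hm : v ∈ W := Submodule.mem_span_singleton_self v
    rw [hb, Submodule.mem_bot] at hm
    rw [hm] at hvee
    simp at hvee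
  have hsep : ∀ s t : M, (∀ u : M →₀ k, lreg k s u - lreg k t u ∈ W) → s = t := by
    intro s t hall
    by_contra hst
    have hv1 : Finsupp.single s (1:k) - Finsupp.single t 1 ∈ W := by
      have := hall (Finsupp.single 1 1)
      rwa [lreg_single, lreg_single, mul_one, mul_one] at this
    obtain ⟨a, ha⟩ := Submodule.mem_span_singleton.mp hv1
    have hcoeff : ∀ y : M, a * (if y ∈ Ift then 1 else 0) =
        (if s = y then (1:k) else 0) - (if t = y then 1 else 0) := by
      intro y
      have := congrArg (fun w : M →₀ k => w y) ha
      simpa [Finsupp.smul_apply, Finsupp.sub_apply, Finsupp.single_apply, hv, ind_apply]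
        using this
    have hs' := hcoeff s
    rw [if_pos rfl, if_neg (Ne.symm hst)] at hs'
    have hsI : s ∈ Ift := by
      by_contra hsn
      rw [if_neg hsn] at hs'
      simp at hs'
    rw [if_pos hsI] at hs'
    have ha1 : a = 1 := by rw [mul_one] at hs'; rw [hs']; ring
    have ht' := hcoeff t
    rw [if_neg hst, if_pos rfl] at ht'
    have htI : t ∈ Ift := by
      by_contra htn
      rw [if_neg htn] at ht'
      simp at ht'
    rw [if_pos htI, mul_one, ha1] at ht'
    -- ht' : (1:k) = 0 - 1
    have h2zero : (2:k) = 0 := by linear_combination ht'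
    have hdvd : ringChar k ∣ 2 := (CharP.cast_eq_zero_iff k (ringChar k) 2).mp (by exact_mod_cast h2zero)
    -- show I = {s, t}
    have hsub : ∀ x ∈ I, x = s ∨ x = t := by
      intro x hx
      by_contra hcon
      push_neg at hcon
      have hx' := hcoeff x
      rw [if_pos ((hmem _).mpr hx), if_neg (fun h => hcon.1 h.symm),
        if_neg (fun h => hcon.2 h.symm), mul_one, ha1] at hx'
      simp at hx'
    have hIeq : I = {s, t} := by
      apply Set.ext
      intro x
      constructor
      · intro hx
        rcases hsub x hx with h | h
        · exact Or.inl h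
        · exact Or.inr h
      · intro hx
        rcases hx with h | h
        · rw [h]; exact (hmem _).mp hsI
        · rw [h]; exact (hmem _).mp htI
    have hcard : Nat.card I = 2 := by
      rw [Nat.card_coe_set_eq, hIeq, Set.ncard_pair hst]
    rw [hcard] at hchar
    exact hchar hdvd
  exact machineL W hinv hbot hsep

end GroupCase

/-- Let `M` be a finite monoid whose minimal two-sided ideal `I` either is not a
group, or is a group whose order is not divisible by the characteristic of `k`.
Then the effective dimension of `M` over `k` is at most `|M| - 1`. -/
theorem effdim_le_card_sub_one
    {M : Type*} [Monoid M] [Fintype M] (k : Type*) [Field k]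
    (I : Set M) (hI : IsMinimalIdeal I)
    (h : ¬ IsGroupSubset I ∨ (IsGroupSubset I ∧ ¬ (ringChar k ∣ Nat.card I))) :
    ∃ φ : M → Matrix (Fin (Fintype.card M - 1)) (Fin (Fintype.card M - 1)) k,
      Function.Injective φ ∧ ∀ s t : M, φ (s * t) = φ s * φ t := by
  classical
  obtain ⟨a₀, ha₀⟩ := hI.1
  obtain ⟨N₀, hN₀, hN₀id⟩ := exists_idem_pow a₀
  set e₀ := a₀ ^ N₀ with he₀
  have he₀I : e₀ ∈ I := ideal_pow_mem hI ha₀ hN₀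
  by_cases hB : ∃ e c, e ∈ I ∧ e * e = e ∧ c ∈ I ∧ c * e ≠ c
  · obtain ⟨e, c, heI, hee, hcI, hce⟩ := hB
    exact caseB2 hI heI hee hcI hce
  by_cases hA : ∃ e c, e ∈ I ∧ e * e = e ∧ c ∈ I ∧ e * c ≠ c
  · obtain ⟨e, c, heI, hee, hcI, hec⟩ := hA
    exact caseA2 hI heI hee hcI hec
  -- group case
  push_neg at hA hB
  have hgrp : IsGroupSubset I := by
    refine ⟨e₀, he₀I, fun a ha => ⟨hA e₀ a he₀I hN₀id ha, hB e₀ a he₀I hN₀id ha⟩, ?_⟩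
    intro a ha
    obtain ⟨Na, hNa, hNaid⟩ := exists_idem_pow a
    have hgaI : a ^ Na ∈ I := ideal_pow_mem hI ha hNa
    have h1 : a ^ Na * e₀ = a ^ Na := hB e₀ (a ^ Na) he₀I hN₀id hgaI
    have h2 : a ^ Na * e₀ = e₀ := hA (a ^ Na) e₀ hgaI hNaid he₀I
    have hae : a ^ Na = e₀ := by rw [← h1, h2]
    obtain ⟨N', rfl⟩ : ∃ n, Na = n + 1 := ⟨Na - 1, by omega⟩
    rcases Nat.eq_zero_or_pos N' with h0 | hpos
    · subst h0
      simp only [zero_add, pow_one] at hae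
      refine ⟨a, ha, ?_, ?_⟩ <;> rw [hae] <;> exact hN₀id
    · refine ⟨a ^ N', ideal_pow_mem hI ha hpos, ?_, ?_⟩
      · rw [← pow_succ']
        exact hae
      · rw [← pow_succ]
        exact hae
  rcases h with hng | ⟨_, hchar⟩
  · exact absurd hgrp hng
  · exact caseGroup hI hgrp hchar
end

section
/- Let S be a finite semigroup and let k and k' be two algebraically closed fields of the same characteristic. Then the effective dimension of S over k equals the effective dimension of S over k'. -/
/-!
Both fields are algebras over the same prime field `F` (`ZMod p` or `ℚ`). The finitely many entries
of a faithful representation over `k`, together with the inverses of their nonzero differences,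
generate a finitely generated `F`-subalgebra `A` of `k`. By Zariski's lemma the residue fields of
`A` are finite over `F`, so `A` has an `F`-algebra map to the algebraically closed field `k'`.
It sends the nonzero differences of entries to units, hence is injective on the entries, and so
turns the representation into a faithful one over `k'` of the same dimension. By symmetry both
fields admit faithful representations in exactly the same dimensions.
-/

/-- The effective dimension of a finite semigroup `S` over a field `k`: the least
`m` such that `S` admits an injective multiplicative representation by `m × m`
matrices over `k`. -/
noncomputable def effDim (k : Type*) [Field k] (S : Type*) [Mul S] : ℕ :=
  sInf {m : ℕ | ∃ φ : S → Matrix (Fin m) (Fin m) k,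
    Function.Injective φ ∧ ∀ s t : S, φ (s * t) = φ s * φ t}

open Function

theorem nonempty_algHom_of_finiteType (F A K : Type*) [Field F] [CommRing A] [Nontrivial A]
    [Algebra F A] [Algebra.FiniteType F A] [Field K] [Algebra F K] [IsAlgClosed K] :
    Nonempty (A →ₐ[F] K) := by
  obtain ⟨M, hM⟩ := Ideal.exists_maximal A
  let := Ideal.Quotient.field M
  have : Algebra.FiniteType F (A ⧸ M) :=
    .of_surjective (Ideal.Quotient.mkₐ F M) (Ideal.Quotient.mkₐ_surjective F M)
  have := finite_of_finite_type_of_isJacobsonRing F (A ⧸ M)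
  exact ⟨IsAlgClosed.lift.comp (Ideal.Quotient.mkₐ F M)⟩

theorem exists_algHom_injOn_of_finite (F : Type*) {k K : Type*} [Field F] [Field k] [Field K]
    [Algebra F k] [Algebra F K] [IsAlgClosed K] {s : Set k} (hs : s.Finite) :
    ∃ (A : Subalgebra F k) (g : A →ₐ[F] K), s ⊆ A ∧ Set.InjOn g (Subtype.val ⁻¹' s) := by
  let A := Algebra.adjoin F (s ∪ (fun p : k × k ↦ (p.1 - p.2)⁻¹) '' s ×ˢ s)
  have : Algebra.FiniteType F A :=
    .adjoin_of_finite (hs.union ((hs.prod hs).image _))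
  obtain ⟨g⟩ := nonempty_algHom_of_finiteType F A K
  refine ⟨A, g, fun x hx ↦ Algebra.subset_adjoin (.inl hx), fun x hx y hy hxy ↦ ?_⟩
  by_contra hne
  have hinv : ((x : k) - y)⁻¹ ∈ A := Algebra.subset_adjoin (.inr ⟨(x, y), ⟨hx, hy⟩, rfl⟩)
  have hunit : IsUnit (x - y) := IsUnit.of_mul_eq_one ⟨_, hinv⟩ <|
    Subtype.ext (mul_inv_cancel₀ (sub_ne_zero.2 (Subtype.coe_injective.ne hne)))
  exact (hunit.map g).ne_zero (by rw [map_sub, hxy, sub_self])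

theorem exists_injective_mul_matrix_of_isAlgClosed (F : Type*) {k K S n : Type*} [Field F]
    [Field k] [Field K] [Algebra F k] [Algebra F K] [IsAlgClosed K] [Mul S] [Finite S]
    [Fintype n] [DecidableEq n] (φ : S → Matrix n n k) (hinj : Injective φ)
    (hmul : ∀ s t, φ (s * t) = φ s * φ t) :
    ∃ ψ : S → Matrix n n K, Injective ψ ∧ ∀ s t, ψ (s * t) = ψ s * ψ t := by
  obtain ⟨A, g, hsA, hg⟩ := exists_algHom_injOn_of_finite F (K := K)
    (Set.finite_range fun x : S × n × n ↦ φ x.1 x.2.1 x.2.2)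
  let Φ : S → Matrix n n A := fun s ↦ .of fun i j ↦ ⟨φ s i j, hsA ⟨(s, i, j), rfl⟩⟩
  have hΦ (s : S) : A.val.mapMatrix (Φ s) = φ s := rfl
  have hval : Injective (A.val.mapMatrix : Matrix n n A → Matrix n n k) :=
    Matrix.map_injective Subtype.val_injective
  have hΦmul (s t : S) : Φ (s * t) = Φ s * Φ t := hval (by rw [map_mul, hΦ, hΦ, hΦ, hmul])
  refine ⟨fun s ↦ g.mapMatrix (Φ s), fun s t hst ↦ hinj ?_, fun s t ↦ ?_⟩
  · rw [← hΦ s, ← hΦ t]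
    exact congrArg _ <| Matrix.ext fun i j ↦
      hg ⟨(s, i, j), rfl⟩ ⟨(t, i, j), rfl⟩ (congrFun₂ hst i j)
  · simp only [hΦmul, map_mul]

theorem exists_injective_mul_matrix_of_ringChar_eq {k K S n : Type*} [Field k] [Field K]
    [IsAlgClosed K] [Mul S] [Finite S] [Fintype n] [DecidableEq n]
    (hchar : ringChar k = ringChar K) (φ : S → Matrix n n k) (hinj : Injective φ)
    (hmul : ∀ s t, φ (s * t) = φ s * φ t) :
    ∃ ψ : S → Matrix n n K, Injective ψ ∧ ∀ s t, ψ (s * t) = ψ s * ψ t := by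
  rcases CharP.char_is_prime_or_zero k (ringChar k) with hp | hp
  · have : Fact (ringChar k).Prime := ⟨hp⟩
    have : CharP K (ringChar k) := hchar ▸ ringChar.charP K
    let := ZMod.algebra k (ringChar k)
    let := ZMod.algebra K (ringChar k)
    exact exists_injective_mul_matrix_of_isAlgClosed (ZMod (ringChar k)) φ hinj hmul
  · have := (CharP.ringChar_zero_iff_CharZero k).1 hp
    have := (CharP.ringChar_zero_iff_CharZero K).1 (hchar ▸ hp)
    exact exists_injective_mul_matrix_of_isAlgClosed ℚ φ hinj hmul

/-- The effective dimension of a finite semigroup is the same over any two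
algebraically closed fields of the same characteristic. -/
theorem effDim_eq_of_isAlgClosed_of_ringChar_eq
    {S : Type*} [Semigroup S] [Finite S]
    (k k' : Type*) [Field k] [Field k'] [IsAlgClosed k] [IsAlgClosed k']
    (hchar : ringChar k = ringChar k') :
    effDim k S = effDim k' S := by
  unfold effDim
  congr 1
  ext m
  exact ⟨fun ⟨φ, hinj, hmul⟩ ↦ exists_injective_mul_matrix_of_ringChar_eq hchar φ hinj hmul,
    fun ⟨φ, hinj, hmul⟩ ↦ exists_injective_mul_matrix_of_ringChar_eq hchar.symm φ hinj hmul⟩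
end

section
/- Let S be a finite semigroup whose effective dimension over the complex numbers ℂ is n. Then there exists a finite field F and an injective map φ : S → Mat_{n×n}(F) with φ(st) = φ(s)φ(t) for all s, t ∈ S; that is, S has an effective representation of dimension n over some finite field. -/
/-!
The entries of a faithful complex representation generate a finitely generated `ℤ`-subalgebra
`R ⊆ ℂ`. Since `ℤ` is a Jacobson ring, so is `R`, and every residue field of `R` at a maximal
ideal is a finitely generated `ℤ`-algebra, hence finite (Zariski's lemma). The Jacobson radical of the
domain `R` is zero, so the nonzero product of the differences of distinct entries avoids some
maximal ideal; reducing modulo that ideal keeps distinct entries distinct and therefore keeps the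
representation faithful.
-/

universe u

open Ideal in
instance Int.instIsJacobsonRing : IsJacobsonRing ℤ := by
  refine isJacobsonRing_iff_prime_eq.mpr fun P hP => ?_
  rcases eq_or_ne P ⊥ with rfl | hP0
  · refine le_antisymm (fun x hx => ?_) le_jacobson
    -- `3 * x + 1` is a unit, so it is `±1`
    have := Int.isUnit_iff.mp (mem_jacobson_bot.mp hx 3)
    rw [mem_bot]
    omega
  · have := hP.isMaximal hP0
    exact jacobson_eq_self_of_isMaximal

theorem finite_of_finiteType_int (K : Type*) [Field K] [Algebra ℤ K] [Algebra.FiniteType ℤ K] :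
    Finite K := by
  -- the canonical `ℤ`-algebra structure, whose scalar action is `zsmul`
  obtain rfl : ‹Algebra ℤ K› = Ring.toIntAlgebra K := Subsingleton.elim _ _
  have : Module.Finite ℤ K := finite_of_finite_type_of_isJacobsonRing ℤ K
  have hchar : ringChar K ≠ 0 := by
    intro h0
    have : CharZero K := (CharP.charP_zero_iff_charZero K).mp (h0 ▸ ringChar.charP K)
    exact Int.not_isField <| (Algebra.IsIntegral.isField_iff_isField
      (algebraMap ℤ K).injective_int).mpr (Field.toIsField K)
  -- a finitely generated abelian group killed by `ringChar K ≠ 0` is finite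
  refine Module.finite_of_fg_torsion K fun x => ?_
  refine ⟨⟨(ringChar K : ℤ), mem_nonZeroDivisors_of_ne_zero (by exact_mod_cast hchar)⟩, ?_⟩
  change (ringChar K : ℤ) • x = 0
  rw [natCast_zsmul, nsmul_eq_mul, ringChar.Nat.cast_ringChar, zero_mul]

theorem exists_ringHom_finite_field_ne_zero {R : Type u} [CommRing R] [IsReduced R]
    [Algebra.FiniteType ℤ R] {a : R} (ha : a ≠ 0) :
    ∃ (F : Type u) (_ : Field F) (_ : Finite F) (f : R →+* F), f a ≠ 0 := by
  have : IsJacobsonRing R := isJacobsonRing_of_finiteType (A := ℤ)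
  have hjac : (⊥ : Ideal R).jacobson = ⊥ := IsJacobsonRing.out ‹_› Ideal.isRadical_bot
  have : a ∉ (⊥ : Ideal R).jacobson := by rwa [hjac, Ideal.mem_bot]
  obtain ⟨m, ⟨-, hm⟩, ham⟩ : ∃ m : Ideal R, (⊥ ≤ m ∧ m.IsMaximal) ∧ a ∉ m := by
    simpa [Ideal.jacobson, Submodule.mem_sInf] using this
  let := Ideal.Quotient.field m
  have : Algebra.FiniteType ℤ (R ⧸ m) :=
    .of_surjective (Ideal.Quotient.mkₐ ℤ m) (Ideal.Quotient.mkₐ_surjective ℤ m)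
  exact ⟨R ⧸ m, _, finite_of_finiteType_int _, Ideal.Quotient.mk m,
    by rwa [ne_eq, Ideal.Quotient.eq_zero_iff_mem]⟩

theorem exists_ringHom_finite_field_injOn {R : Type u} [CommRing R] [IsDomain R]
    [Algebra.FiniteType ℤ R] {s : Set R} (hs : s.Finite) :
    ∃ (F : Type u) (_ : Field F) (_ : Finite F) (f : R →+* F), s.InjOn f := by
  classical
  let d : R := ∏ p ∈ hs.offDiag.toFinset, (p.1 - p.2)
  have hd : d ≠ 0 := Finset.prod_ne_zero_iff.mpr fun p hp => by
    simpa [sub_eq_zero] using ((Set.Finite.mem_toFinset _).mp hp).2.2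
  obtain ⟨F, _, _, f, hfd⟩ := exists_ringHom_finite_field_ne_zero hd
  refine ⟨F, _, ‹_›, f, fun x hx y hy hxy => by_contra fun hne => hfd ?_⟩
  rw [map_prod]
  refine Finset.prod_eq_zero (i := (x, y)) (by simp [hx, hy, hne]) ?_
  rw [map_sub, hxy, sub_self]

theorem Matrix.map_injOn {m n α β : Type*} {f : α → β} {s : Set α} (hf : s.InjOn f) :
    {A : Matrix m n α | ∀ i j, A i j ∈ s}.InjOn (Matrix.map · f) :=
  fun _ hA _ hB hAB => Matrix.ext fun i j => hf (hA i j) (hB i j) (congrFun₂ hAB i j)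

theorem exists_finite_field_injective_mulHom_matrix {S : Type*} {K : Type u} [Mul S] [Finite S]
    [CommRing K] [IsDomain K] {m : Type*} [Fintype m] [DecidableEq m]
    (φ : S →ₙ* Matrix m m K) (hφ : Function.Injective φ) :
    ∃ (F : Type u) (_ : Field F) (_ : Finite F) (ψ : S →ₙ* Matrix m m F),
      Function.Injective ψ := by
  let s : Set K := Set.range fun p : S × m × m => φ p.1 p.2.1 p.2.2
  have hs : s.Finite := Set.finite_range _
  let R := Algebra.adjoin ℤ s
  have : Algebra.FiniteType ℤ R := .adjoin_of_finite hs
  let φR : S → Matrix m m R := fun x =>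
    .of fun i j => ⟨φ x i j, Algebra.subset_adjoin ⟨(x, i, j), rfl⟩⟩
  have hφR_mem (x : S) : ∀ i j, φR x i j ∈ Subtype.val ⁻¹' s := fun i j => ⟨(x, i, j), rfl⟩
  have hφR_map (x : S) : (φR x).map Subtype.val = φ x := rfl
  have hφR_mul (x y : S) : φR (x * y) = φR x * φR y := by
    refine Matrix.map_injective Subtype.val_injective ?_
    change (φR (x * y)).map Subtype.val = (φR x * φR y).map (R.val : R →+* K)
    rw [Matrix.map_mul]
    exact map_mul φ x y
  obtain ⟨F, _, _, f, hf⟩ :=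
    exists_ringHom_finite_field_injOn (R := R) (hs.preimage Subtype.val_injective.injOn)
  refine ⟨F, _, ‹_›, ⟨fun x => (φR x).map f, fun x y => ?_⟩, fun x y hxy => ?_⟩
  · rw [hφR_mul, Matrix.map_mul]
  · exact hφ <| (hφR_map x).symm.trans <| (hφR_map y) ▸
      congrArg (Matrix.map · Subtype.val) (Matrix.map_injOn hf (hφR_mem x) (hφR_mem y) hxy)

/-- If the effective dimension of a finite semigroup `S` over `ℂ` is `n`, then
`S` has an effective representation of dimension `n` over some finite field. -/
theorem exists_finite_field_effective_rep
    {S : Type*} [Semigroup S] [Finite S] (n : ℕ)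
    (h : IsLeast {m : ℕ | ∃ φ : S → Matrix (Fin m) (Fin m) ℂ,
      Function.Injective φ ∧ ∀ s t : S, φ (s * t) = φ s * φ t} n) :
    ∃ (F : Type) (_ : Field F) (_ : Fintype F)
      (φ : S → Matrix (Fin n) (Fin n) F),
        Function.Injective φ ∧ ∀ s t : S, φ (s * t) = φ s * φ t := by
  obtain ⟨φ, hφ, hmul⟩ := h.1
  obtain ⟨F, _, _, ψ, hψ⟩ := exists_finite_field_injective_mulHom_matrix ⟨φ, hmul⟩ hφ
  exact ⟨F, _, .ofFinite F, ψ, hψ, map_mul ψ⟩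
end

section
/- Let M be a finite commutative monoid in which every element is regular, i.e. for every a ∈ M there is b ∈ M with a·b·a = a (so M is a finite commutative inverse monoid). Let M̂ = Hom(M, ℂ) be the dual monoid, consisting of all monoid homomorphisms from M to the multiplicative monoid of ℂ, with pointwise multiplication. Then the effective dimension of M over ℂ equals the minimum cardinality of a subset X ⊆ M̂ that generates M̂ as a monoid. -/
set_option linter.unusedSectionVars false

open Polynomial

section Aux
variable {M : Type*} [CommMonoid M] [Fintype M]

set_option linter.unusedSectionVars false in
private lemma aux_cycle_of_lt {a b : M} (key : ∀ k : ℕ, a ^ (k + 1) * b ^ k = a)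
    {i j : ℕ} (hlt : i < j) (hpow : a ^ (i + 1) = a ^ (j + 1)) :
    ∃ p, 1 ≤ p ∧ a ^ (p + 1) = a := by
  refine ⟨j - i, by omega, ?_⟩
  have h1 : a ^ (j + 1) = a ^ (j - i) * a ^ (i + 1) := by
    rw [← pow_add]; congr 1; omega
  calc a ^ (j - i + 1) = a ^ (j - i) * a := by rw [pow_succ]
    _ = a ^ (j - i) * (a ^ (i + 1) * b ^ i) := by rw [key]
    _ = (a ^ (j - i) * a ^ (i + 1)) * b ^ i := by rw [mul_assoc]
    _ = a ^ (j + 1) * b ^ i := by rw [← h1]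
    _ = a ^ (i + 1) * b ^ i := by rw [← hpow]
    _ = a := key i

lemma aux_pow_cycle (hreg : ∀ a : M, ∃ b : M, a * b * a = a) (a : M) :
    ∃ p, 1 ≤ p ∧ a ^ (p + 1) = a := by
  obtain ⟨b, hb⟩ := hreg a
  have key : ∀ k : ℕ, a ^ (k + 1) * b ^ k = a := by
    intro k; induction k with
    | zero => simp
    | succ k ih =>
      have h1 : a ^ (k + 1 + 1) * b ^ (k + 1) = (a ^ (k + 1) * b ^ k) * (a * b) := by
        rw [pow_succ a, pow_succ b]
        simp only [mul_assoc, mul_comm, mul_left_comm]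
      rw [h1, ih, show a * (a * b) = a * b * a by
        simp only [mul_assoc, mul_comm, mul_left_comm], hb]
  obtain ⟨i, j, hij, hpow⟩ := Fintype.exists_ne_map_eq_of_card_lt
      (fun k : Fin (Fintype.card M + 1) => a ^ (k.val + 1)) (by simp)
  rcases lt_or_gt_of_ne (fun h : i.val = j.val => hij (Fin.ext h)) with h | h
  · exact aux_cycle_of_lt key h hpow
  · exact aux_cycle_of_lt key h hpow.symm

lemma aux_exists_N (hreg : ∀ a : M, ∃ b : M, a * b * a = a) :
    ∃ N, 1 ≤ N ∧ ∀ a : M, a ^ (N + 1) = a := by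
  choose p hp1 hp2 using aux_pow_cycle hreg
  refine ⟨∏ a : M, p a, Finset.one_le_prod' fun a _ => hp1 a, fun a => ?_⟩
  obtain ⟨k, hk⟩ : p a ∣ ∏ x : M, p x := Finset.dvd_prod_of_mem p (Finset.mem_univ a)
  rw [hk]
  clear hk
  induction k with
  | zero => simp
  | succ k ih =>
    have : p a * (k + 1) + 1 = p a + (p a * k + 1) := by ring
    rw [this, pow_add, ih, ← pow_succ, hp2]

end Aux

section Aux2
variable {M : Type*} [CommMonoid M]

lemma aux_idem {N : ℕ} (hN1 : 1 ≤ N) {a : M} (ha : a ^ (N + 1) = a) :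
    a ^ N * a ^ N = a ^ N := by
  have h : N + N = (N - 1) + (N + 1) := by omega
  rw [← pow_add, h, pow_add, ha, ← pow_succ]
  congr 1; omega

lemma aux_idem_pow {e : M} (he : e * e = e) {k : ℕ} (hk : 1 ≤ k) : e ^ k = e := by
  induction k with
  | zero => omega
  | succ k ih =>
    rcases Nat.eq_or_lt_of_le hk with h | h
    · simp [← h]
    · rw [pow_succ, ih (by omega), he]

lemma aux_cond_mul {N : ℕ} (hN1 : 1 ≤ N) {e : M} (he : ∀ b : M, b ^ (N + 1) = b)
    (x y : M) : (x * y) ^ N * e = e ↔ x ^ N * e = e ∧ y ^ N * e = e := by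
  rw [mul_pow]
  constructor
  · intro h
    constructor
    · have hx : x ^ N * e = x ^ N * (x ^ N * y ^ N * e) := by rw [h]
      rw [show x ^ N * (x ^ N * y ^ N * e) = (x ^ N * x ^ N) * y ^ N * e by
            simp only [mul_assoc], aux_idem hN1 (he x)] at hx
      rw [hx, h]
    · have hy : y ^ N * e = y ^ N * (x ^ N * y ^ N * e) := by rw [h]
      rw [show y ^ N * (x ^ N * y ^ N * e) = x ^ N * (y ^ N * y ^ N) * e by
            simp only [mul_assoc, mul_left_comm], aux_idem hN1 (he y)] at hy
      rw [hy, h]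
  · rintro ⟨h1, h2⟩
    rw [mul_assoc, h2, h1]

open Classical in
/-- Extend a multiplicative function on the corner at an idempotent `e` to a
character of `M`, by zero outside the support. -/
noncomputable def cornerChar (N : ℕ) (hN1 : 1 ≤ N) (hN : ∀ b : M, b ^ (N + 1) = b)
    (e : M) (he : e * e = e) (f : M → ℂ) (hf1 : f e = 1)
    (hfm : ∀ x y : M, x * e = x → y * e = y → x ^ N = e → y ^ N = e →
      f (x * y) = f x * f y) : M →* ℂ where
  toFun x := if x ^ N * e = e then f (x * e) else 0
  map_one' := by
    show (if (1:M) ^ N * e = e then f (1 * e) else 0) = 1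
    rw [if_pos (by rw [one_pow, one_mul]), one_mul, hf1]
  map_mul' x y := by
    show (if (x*y) ^ N * e = e then f (x*y * e) else 0) =
      (if x ^ N * e = e then f (x * e) else 0) * (if y ^ N * e = e then f (y * e) else 0)
    by_cases hx : x ^ N * e = e
    · by_cases hy : y ^ N * e = e
      · rw [if_pos ((aux_cond_mul hN1 hN x y).mpr ⟨hx, hy⟩), if_pos hx, if_pos hy,
          show x * y * e = (x * e) * (y * e) by rw [mul_mul_mul_comm, he]]
        exact hfm _ _ (by rw [mul_assoc, he]) (by rw [mul_assoc, he])
          (by rw [mul_pow, aux_idem_pow he hN1, hx])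
          (by rw [mul_pow, aux_idem_pow he hN1, hy])
      · rw [if_neg (fun hc => hy ((aux_cond_mul hN1 hN x y).mp hc).2), if_neg hy, mul_zero]
    · rw [if_neg (fun hc => hx ((aux_cond_mul hN1 hN x y).mp hc).1), if_neg hx, zero_mul]

lemma cornerChar_apply_mem (N : ℕ) (hN1 : 1 ≤ N) (hN : ∀ b : M, b ^ (N + 1) = b)
    (e : M) (he : e * e = e) (f : M → ℂ) (hf1 : f e = 1) (hfm) {x : M}
    (hx : x ^ N * e = e) : cornerChar N hN1 hN e he f hf1 hfm x = f (x * e) := by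
  simp only [cornerChar, MonoidHom.coe_mk, OneHom.coe_mk, if_pos hx]

lemma cornerChar_apply_notMem (N : ℕ) (hN1 : 1 ≤ N) (hN : ∀ b : M, b ^ (N + 1) = b)
    (e : M) (he : e * e = e) (f : M → ℂ) (hf1 : f e = 1) (hfm) {x : M}
    (hx : ¬ x ^ N * e = e) : cornerChar N hN1 hN e he f hf1 hfm x = 0 := by
  simp only [cornerChar, MonoidHom.coe_mk, OneHom.coe_mk, if_neg hx]

end Aux2
section Sep
variable {M : Type*} [CommMonoid M] [Fintype M]

open Classical in
lemma aux_sep {N : ℕ} (hN1 : 1 ≤ N) (hN : ∀ b : M, b ^ (N + 1) = b)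
    {a b : M} (hab : a ≠ b) : ∃ χ : M →* ℂ, χ a ≠ χ b := by
  by_cases h1 : a ^ N * b ^ N = a ^ N
  · by_cases h2 : a ^ N * b ^ N = b ^ N
    · -- same idempotent: use the corner group and duality
      have heq : a ^ N = b ^ N := h1.symm.trans h2
      have he : a ^ N * a ^ N = a ^ N := aux_idem hN1 (hN a)
      have haU : a * a ^ N = a := by rw [← pow_succ', hN a]
      have hbU : b * a ^ N = b := by rw [heq, ← pow_succ', hN b]
      have hbN : b ^ N = a ^ N := heq.symm
      letI He := {x : M // x * a ^ N = x ∧ x ^ N = a ^ N}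
      letI : CommGroup He :=
      { mul := fun x y => ⟨x.1 * y.1, by rw [mul_assoc, y.2.1],
          by rw [mul_pow, x.2.2, y.2.2, he]⟩
        one := ⟨a ^ N, he, aux_idem_pow he hN1⟩
        inv := fun x => ⟨x.1 ^ (N - 1) * a ^ N, by rw [mul_assoc, he], by
          rw [mul_pow, ← pow_mul, show (N - 1) * N = N * (N - 1) by ring, pow_mul,
            x.2.2, aux_idem_pow he hN1, ← pow_succ, show N - 1 + 1 = N by omega,
            aux_idem_pow he hN1]⟩
        mul_assoc := fun x y z => Subtype.ext (mul_assoc x.1 y.1 z.1)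
        one_mul := fun x => Subtype.ext (by
          show a ^ N * x.1 = x.1; rw [mul_comm]; exact x.2.1)
        mul_one := fun x => Subtype.ext x.2.1
        mul_comm := fun x y => Subtype.ext (mul_comm x.1 y.1)
        inv_mul_cancel := fun x => Subtype.ext (by
          show x.1 ^ (N - 1) * a ^ N * x.1 = a ^ N
          rw [mul_right_comm, ← pow_succ, show N - 1 + 1 = N by omega, x.2.2, he]) }
      haveI : NeZero ((Monoid.exponent He : ℂ)) :=
        ⟨Nat.cast_ne_zero.mpr Monoid.exponent_ne_zero_of_finite⟩
      have hne : (⟨a, haU, rfl⟩ : He) * (⟨b, hbU, hbN⟩ : He)⁻¹ ≠ 1 := by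
        intro h
        exact hab (congrArg Subtype.val (mul_inv_eq_one.mp h))
      obtain ⟨θ, hθ⟩ := CommGroup.exists_apply_ne_one_of_hasEnoughRootsOfUnity He ℂ hne
      have hθab : ((θ ⟨a, haU, rfl⟩ : ℂˣ) : ℂ) ≠ ((θ ⟨b, hbU, hbN⟩ : ℂˣ) : ℂ) := by
        intro h
        exact hθ (by rw [map_mul, map_inv]; exact mul_inv_eq_one.mpr (Units.ext h))
      let f : M → ℂ := fun x => if h : x * a ^ N = x ∧ x ^ N = a ^ N
          then ((θ ⟨x, h⟩ : ℂˣ) : ℂ) else 0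
      have hfa : ∀ (x : M) (h : x * a ^ N = x ∧ x ^ N = a ^ N),
          f x = ((θ ⟨x, h⟩ : ℂˣ) : ℂ) := by
        intro x h
        show (if h : x * a ^ N = x ∧ x ^ N = a ^ N
          then ((θ ⟨x, h⟩ : ℂˣ) : ℂ) else 0) = _
        rw [dif_pos h]
      have hf1 : f (a ^ N) = 1 := by
        rw [hfa (a ^ N) ⟨he, aux_idem_pow he hN1⟩,
          show (⟨a ^ N, he, aux_idem_pow he hN1⟩ : He) = 1 from rfl, map_one, Units.val_one]
      have hfm : ∀ x y : M, x * a ^ N = x → y * a ^ N = y → x ^ N = a ^ N →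
          y ^ N = a ^ N → f (x * y) = f x * f y := by
        intro x y hx1 hy1 hx2 hy2
        rw [hfa _ ⟨by rw [mul_assoc, hy1], by rw [mul_pow, hx2, hy2, he]⟩,
          hfa _ ⟨hx1, hx2⟩, hfa _ ⟨hy1, hy2⟩,
          show (⟨x * y, _⟩ : He) = ⟨x, hx1, hx2⟩ * ⟨y, hy1, hy2⟩ from Subtype.ext rfl,
          map_mul, Units.val_mul]
      refine ⟨cornerChar N hN1 hN (a ^ N) he f hf1 hfm, ?_⟩
      rw [cornerChar_apply_mem N hN1 hN (a ^ N) he f hf1 hfm he,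
        cornerChar_apply_mem N hN1 hN (a ^ N) he f hf1 hfm
          (by rw [hbN] at h2 ⊢; exact h2),
        haU, hbU, hfa a ⟨haU, rfl⟩, hfa b ⟨hbU, hbN⟩]
      exact hθab
    · -- separated by support character at b^N
      refine ⟨cornerChar N hN1 hN (b ^ N) (aux_idem hN1 (hN b)) (fun _ => (1:ℂ)) rfl
        (fun _ _ _ _ _ _ => (one_mul 1).symm), ?_⟩
      rw [cornerChar_apply_notMem N hN1 hN (b ^ N) (aux_idem hN1 (hN b)) _ rfl _ h2,
        cornerChar_apply_mem N hN1 hN (b ^ N) (aux_idem hN1 (hN b)) _ rfl _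
          (aux_idem hN1 (hN b))]
      exact zero_ne_one
  · -- separated by support character at a^N
    refine ⟨cornerChar N hN1 hN (a ^ N) (aux_idem hN1 (hN a)) (fun _ => (1:ℂ)) rfl
      (fun _ _ _ _ _ _ => (one_mul 1).symm), ?_⟩
    rw [cornerChar_apply_mem N hN1 hN (a ^ N) (aux_idem hN1 (hN a)) _ rfl _
        (aux_idem hN1 (hN a)),
      cornerChar_apply_notMem N hN1 hN (a ^ N) (aux_idem hN1 (hN a)) _ rfl _
        (fun hc => h1 (by rwa [mul_comm] at hc))]
    exact one_ne_zero

end Sep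

section SW
variable {M : Type*} [Fintype M]

lemma aux_subalgebra_eq_top (F : Subalgebra ℂ (M → ℂ))
    (hsep : ∀ a b : M, a ≠ b → ∃ f ∈ F, f a ≠ f b) : F = ⊤ := by
  classical
  have hdelta : ∀ a : M, ∃ d ∈ F, d a = 1 ∧ ∀ b : M, b ≠ a → d b = 0 := by
    intro a
    have h : ∀ b : M, b ≠ a → ∃ f, f ∈ F ∧ f b ≠ f a := fun b hb => by
      obtain ⟨f, hf, hne⟩ := hsep b a hb; exact ⟨f, hf, hne⟩
    choose! f hfF hfne using h
    refine ⟨∏ b ∈ Finset.univ.erase a,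
      (f b a - f b b)⁻¹ • (f b - algebraMap ℂ (M → ℂ) (f b b)), ?_, ?_, ?_⟩
    · exact Subalgebra.prod_mem F fun b hb =>
        Subalgebra.smul_mem F (Subalgebra.sub_mem F (hfF b (Finset.mem_erase.mp hb).1)
          (Subalgebra.algebraMap_mem F _)) _
    · rw [Finset.prod_apply]
      refine Finset.prod_eq_one fun b hb => ?_
      have hb' := (Finset.mem_erase.mp hb).1
      simp only [Pi.smul_apply, Pi.sub_apply, Pi.algebraMap_apply, smul_eq_mul]
      rw [Algebra.algebraMap_self_apply]
      exact inv_mul_cancel₀ (sub_ne_zero.mpr fun h => hfne b hb' h.symm)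
    · intro b₀ hb₀
      rw [Finset.prod_apply]
      refine Finset.prod_eq_zero (Finset.mem_erase.mpr ⟨hb₀, Finset.mem_univ b₀⟩) ?_
      simp only [Pi.smul_apply, Pi.sub_apply, Pi.algebraMap_apply, smul_eq_mul]
      rw [Algebra.algebraMap_self_apply, sub_self, mul_zero]
  choose d hdF hd1 hd0 using hdelta
  rw [Algebra.eq_top_iff]
  intro g
  have hg : g = ∑ a : M, g a • d a := by
    funext x
    rw [Finset.sum_apply]
    rw [Finset.sum_eq_single x (fun a _ ha => by
      simp only [Pi.smul_apply, smul_eq_mul]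
      rw [hd0 a x (Ne.symm ha), mul_zero]) (fun h => absurd (Finset.mem_univ x) h)]
    simp only [Pi.smul_apply, smul_eq_mul]
    rw [hd1 x, mul_one]
  rw [hg]
  exact Subalgebra.sum_mem F fun a _ => Subalgebra.smul_mem F (hdF a) _

end SW

section Fact2
variable {M : Type*} [CommMonoid M] [Fintype M]

lemma aux_closure_eq_top (X : Set (M →* ℂ))
    (hsep : ∀ a b : M, a ≠ b → ∃ χ ∈ X, χ a ≠ χ b) :
    Submonoid.closure X = ⊤ := by
  classical
  let c : (M →* ℂ) →* (M → ℂ) :=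
    { toFun := fun χ => ⇑χ, map_one' := rfl, map_mul' := fun _ _ => rfl }
  have hA : Algebra.adjoin ℂ (c '' X) = ⊤ := by
    refine aux_subalgebra_eq_top _ fun a b hab => ?_
    obtain ⟨χ, hχ, hne⟩ := hsep a b hab
    exact ⟨⇑χ, Algebra.subset_adjoin ⟨χ, hχ, rfl⟩, hne⟩
  have hspan : Submodule.span ℂ (c '' (Submonoid.closure X : Set (M →* ℂ))) = ⊤ := by
    have h2 := Algebra.adjoin_eq_span (R := ℂ) (s := c '' X)
    rw [← MonoidHom.map_mclosure, hA, Algebra.top_toSubmodule, Submonoid.coe_map] at h2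
    exact h2.symm
  rw [Submonoid.eq_top_iff']
  intro χ₀
  by_contra hχ₀
  have li := linearIndependent_monoidHom M ℂ
  have hnotin := li.notMem_span_image
    (s := (Submonoid.closure X : Set (M →* ℂ))) (x := χ₀) hχ₀
  exact hnotin (hspan ▸ Submodule.mem_top)

end Fact2
open Polynomial

section GE
variable {M : Type*} [CommMonoid M] [Fintype M]

lemma aux_exists_sep_finset {N : ℕ} (hN1 : 1 ≤ N) (hN : ∀ b : M, b ^ (N + 1) = b)
    {m : ℕ} (φ : M → Matrix (Fin m) (Fin m) ℂ) (hinj : Function.Injective φ)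
    (hmul : ∀ s t : M, φ (s * t) = φ s * φ t) :
    ∃ X : Finset (M →* ℂ), X.card ≤ m ∧ ∀ a b : M, a ≠ b → ∃ χ ∈ X, χ a ≠ χ b := by
  classical
  set f : M → Module.End ℂ (Fin m → ℂ) := fun a => Matrix.toLin' (φ a) with hfdef
  have hf : ∀ a b : M, f (a * b) = f a * f b := by
    intro a b
    show Matrix.toLin' (φ (a * b)) = Matrix.toLin' (φ a) * Matrix.toLin' (φ b)
    rw [hmul, Matrix.toLin'_mul]
    rfl
  have hcomm : ∀ a b : M, Commute (f a) (f b) := fun a b => by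
    show f a * f b = f b * f a
    rw [← hf, ← hf, mul_comm a b]
  have hpow : ∀ (a : M) (k : ℕ), f a ^ (k + 1) = f (a ^ (k + 1)) := by
    intro a k
    induction k with
    | zero => simp
    | succ k ih => rw [pow_succ (f a), ih, ← hf, ← pow_succ]
  have hss : ∀ a : M, (f a).IsFinitelySemisimple := by
    intro a
    have hXNe : (X ^ (N - 1) * X : ℂ[X]) = X ^ N := by
      rw [← pow_succ]; congr 1; omega
    have hcop : IsCoprime (X : ℂ[X]) (X ^ N - C 1) := by
      refine ⟨X ^ (N - 1), -1, ?_⟩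
      rw [hXNe, C_1]; ring
    have hsepp : ((X : ℂ[X]) * (X ^ N - C 1)).Separable :=
      separable_X.mul (separable_X_pow_sub_C 1 (Nat.cast_ne_zero.mpr (by omega)) one_ne_zero)
        hcop
    have hsq : Squarefree (X ^ (N + 1) - X : ℂ[X]) := by
      have : (X ^ (N + 1) - X : ℂ[X]) = X * (X ^ N - C 1) := by
        rw [C_1]; ring
      rw [this]
      exact hsepp.squarefree
    have haev : aeval (f a) (X ^ (N + 1) - X : ℂ[X]) = 0 := by
      rw [map_sub, aeval_X_pow, aeval_X, hpow, hN a, sub_self]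
    exact (Module.End.isSemisimple_of_squarefree_aeval_eq_zero hsq haev).isFinitelySemisimple
  have htop : ∀ a : M, ⨆ μ, (f a).maxGenEigenspace μ = ⊤ := fun a =>
    Module.End.iSup_maxGenEigenspace_eq_top (f a)
  have hspan := Module.End.iSup_iInf_maxGenEigenspace_eq_top_of_iSup_maxGenEigenspace_eq_top_of_commute
    f (fun a b _ => hcomm a b) htop
  set E : (M → ℂ) → Submodule ℂ (Fin m → ℂ) := fun χ => ⨅ a, (f a).eigenspace (χ a)
    with hEdef
  have hEeq : ∀ χ : M → ℂ, (⨅ a, (f a).maxGenEigenspace (χ a)) = E χ := fun χ =>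
    iInf_congr fun a => (hss a).maxGenEigenspace_eq_eigenspace (χ a)
  have hspan' : ⨆ χ : M → ℂ, E χ = ⊤ := by
    rw [← hspan]; exact iSup_congr fun χ => (hEeq χ).symm
  have hindep : iSupIndep E := by
    have h := Module.End.independent_iInf_maxGenEigenspace_of_forall_mapsTo f
      (fun i j μ => Module.End.mapsTo_maxGenEigenspace_of_comm (hcomm j i) μ)
    have : (fun χ : M → ℂ => ⨅ a, (f a).maxGenEigenspace (χ a)) = E := funext hEeq
    rwa [this] at h
  set S : Set (M → ℂ) := {χ | E χ ≠ ⊥} with hSdef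
  have hact : ∀ χ, ∀ a : M, ∀ v ∈ E χ, f a v = χ a • v := by
    intro χ a v hv
    exact Module.End.mem_eigenspace_iff.mp ((Submodule.mem_iInf _).mp hv a)
  have hvec : ∀ χ ∈ S, ∃ v ∈ E χ, v ≠ 0 := by
    intro χ hχ
    obtain ⟨v, hv, hv0⟩ := Submodule.ne_bot_iff _ |>.mp hχ
    exact ⟨v, hv, hv0⟩
  have hmulS : ∀ χ ∈ S, ∀ s t : M, χ (s * t) = χ s * χ t := by
    intro χ hχ s t
    obtain ⟨v, hv, hv0⟩ := hvec χ hχ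
    have h1 : f (s * t) v = χ (s * t) • v := hact χ (s * t) v hv
    have h2 : f (s * t) v = (χ s * χ t) • v := by
      rw [hf, Module.End.mul_apply, hact χ t v hv, map_smul, hact χ s v hv, smul_smul,
        mul_comm (χ t) (χ s)]
    exact smul_left_injective ℂ hv0 (h1.symm.trans h2)
  have hone : ∀ χ ∈ S, χ 1 = 1 ∨ ∀ x : M, χ x = 0 := by
    intro χ hχ
    have h11 : χ 1 * χ 1 = χ 1 := by rw [← hmulS χ hχ 1 1, one_mul]
    have h12 : χ 1 * (χ 1 - 1) = 0 := by rw [mul_sub, h11, mul_one, sub_self]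
    rcases mul_eq_zero.mp h12 with h | h
    · refine Or.inr fun x => ?_
      rw [← mul_one x, hmulS χ hχ x 1, h, mul_zero]
    · exact Or.inl (sub_eq_zero.mp h)
  -- linear independence of chosen eigenvectors, cardinality bound
  choose v hvE hv0 using fun σ : S => hvec σ.1 σ.2
  have hli : LinearIndependent ℂ v := by
    refine iSupIndep.linearIndependent (fun σ : S => E σ.1) ?_ hvE hv0
    exact hindep.comp Subtype.val_injective
  haveI hSfinite : Finite S := hli.finite
  have hfin : S.Finite := Set.toFinite S
  letI := hfin.fintype
  have hcardS : Fintype.card S ≤ m := by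
    have := hli.fintype_card_le_finrank
    rwa [Module.finrank_fin_fun] at this
  -- the finset of monoid homs
  have hXSfin : {ψ : M →* ℂ | ⇑ψ ∈ S}.Finite := by
    have : {ψ : M →* ℂ | ⇑ψ ∈ S} = DFunLike.coe ⁻¹' S := rfl
    rw [this]
    exact Set.Finite.preimage (Set.injOn_of_injective DFunLike.coe_injective) hfin
  refine ⟨hXSfin.toFinset, ?_, ?_⟩
  · -- cardinality
    have hinj2 : Set.InjOn (fun ψ : M →* ℂ => ⇑ψ) hXSfin.toFinset := fun x _ y _ h =>
      DFunLike.coe_injective h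
    have hmapsto : ∀ ψ ∈ hXSfin.toFinset, (fun ψ : M →* ℂ => ⇑ψ) ψ ∈ hfin.toFinset := by
      intro ψ hψ
      rw [Set.Finite.mem_toFinset] at hψ ⊢
      exact hψ
    calc hXSfin.toFinset.card ≤ hfin.toFinset.card :=
          Finset.card_le_card_of_injOn _ hmapsto hinj2
      _ = Fintype.card S := by rw [Set.Finite.card_toFinset]
      _ ≤ m := hcardS
  · -- separation
    intro a b hab
    have hfab : φ a ≠ φ b := fun h => hab (hinj h)
    have hsepS : ∃ χ ∈ S, χ a ≠ χ b := by
      by_contra hcon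
      push_neg at hcon
      apply hfab
      have hfeq : f a = f b := by
        have hker : ∀ χ : M → ℂ,
            (⨅ i, (f i).maxGenEigenspace (χ i)) ≤ LinearMap.ker (f a - f b) := by
          intro χ
          rw [hEeq]
          by_cases hχ : χ ∈ S
          · intro x hx
            rw [LinearMap.mem_ker, LinearMap.sub_apply, hact χ a x hx, hact χ b x hx,
              hcon χ hχ, sub_self]
          · have : E χ = ⊥ := of_not_not hχ
            rw [this]
            exact bot_le
        have h1 : (⊤ : Submodule ℂ (Fin m → ℂ)) ≤ LinearMap.ker (f a - f b) :=
          hspan ▸ iSup_le hker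
        have h2 : f a - f b = 0 := LinearMap.ker_eq_top.mp (top_le_iff.mp h1)
        exact sub_eq_zero.mp h2
      exact Matrix.toLin'.injective hfeq
    obtain ⟨χ, hχS, hχab⟩ := hsepS
    have hχ0 : ¬(∀ x : M, χ x = 0) := fun h0 => hχab (by rw [h0 a, h0 b])
    have hone' : χ 1 = 1 := (hone χ hχS).resolve_right hχ0
    refine ⟨⟨⟨χ, hone'⟩, fun s t => hmulS χ hχS s t⟩, ?_, hχab⟩
    rw [Set.Finite.mem_toFinset]
    exact hχS

end GE

section LE
variable {M : Type*} [CommMonoid M] [Fintype M]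

lemma aux_diag (hsepAll : ∀ a b : M, a ≠ b → ∃ χ : M →* ℂ, χ a ≠ χ b)
    (X : Finset (M →* ℂ)) (hX : Submonoid.closure (X : Set (M →* ℂ)) = ⊤) :
    ∃ φ : M → Matrix (Fin X.card) (Fin X.card) ℂ,
      Function.Injective φ ∧ ∀ s t : M, φ (s * t) = φ s * φ t := by
  classical
  let e : Fin X.card ≃ {x // x ∈ X} := X.equivFin.symm
  refine ⟨fun a => Matrix.diagonal (fun i => (e i : M →* ℂ) a), ?_, ?_⟩
  · intro a b hab_eq
    by_contra hne
    have hagree : ∀ χ ∈ X, χ a = χ b := by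
      intro χ hχ
      have h := congrFun (congrFun hab_eq (e.symm ⟨χ, hχ⟩)) (e.symm ⟨χ, hχ⟩)
      simpa [Matrix.diagonal_apply_eq] using h
    have hall : ∀ χ : M →* ℂ, χ a = χ b := by
      intro χ
      have hmem : χ ∈ Submonoid.closure (X : Set (M →* ℂ)) := hX ▸ Submonoid.mem_top χ
      induction hmem using Submonoid.closure_induction with
      | mem ψ hψ => exact hagree ψ hψ
      | one => rfl
      | mul ψ₁ ψ₂ _ _ h1 h2 => rw [MonoidHom.mul_apply, MonoidHom.mul_apply, h1, h2]
    obtain ⟨χ, hχ⟩ := hsepAll a b hne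
    exact hχ (hall χ)
  · intro s t
    show Matrix.diagonal (fun i => (e i : M →* ℂ) (s * t)) = _
    rw [Matrix.diagonal_mul_diagonal]
    have h : (fun i => (e i : M →* ℂ) (s * t)) = fun i => (e i : M →* ℂ) s * (e i : M →* ℂ) t :=
      funext fun i => map_mul (e i : M →* ℂ) s t
    rw [h]

lemma aux_regular : ∃ φ : M → Matrix (Fin (Fintype.card M)) (Fin (Fintype.card M)) ℂ,
    Function.Injective φ ∧ ∀ s t : M, φ (s * t) = φ s * φ t := by
  classical
  let q : Fin (Fintype.card M) ≃ M := (Fintype.equivFin M).symm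
  refine ⟨fun a => Matrix.of fun i j => if q i = a * q j then (1 : ℂ) else 0, ?_, ?_⟩
  · intro a b h
    have h1 : (1 : ℂ) = if a = b then 1 else 0 := by
      have h2 := congrFun (congrFun h (q.symm a)) (q.symm 1)
      simpa [Matrix.of_apply, Equiv.apply_symm_apply] using h2
    by_cases hab : a = b
    · exact hab
    · rw [if_neg hab] at h1
      exact absurd h1.symm zero_ne_one
  · intro s t
    ext i j
    rw [Matrix.mul_apply]
    rw [Finset.sum_eq_single (q.symm (t * q j))]
    · simp [Matrix.of_apply, Equiv.apply_symm_apply, mul_assoc]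
    · intro k _ hk
      have : q k ≠ t * q j := fun hc => hk (by rw [← hc, Equiv.symm_apply_apply])
      simp only [Matrix.of_apply, if_neg this, mul_zero]
    · intro h
      exact absurd (Finset.mem_univ _) h

end LE

/-- Let `M` be a finite commutative inverse monoid (a finite commutative monoid
in which every element is regular).  Then the effective dimension of `M` over
`ℂ` equals the minimum number of elements needed to generate the dual monoid
`M̂ = Hom(M, ℂ)` (with pointwise multiplication) as a monoid. -/
theorem effDim_comm_inverse_monoid_eq_min_generators_of_dual
    {M : Type*} [CommMonoid M] [Fintype M]
    (hreg : ∀ a : M, ∃ b : M, a * b * a = a) :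
    sInf {m : ℕ | ∃ φ : M → Matrix (Fin m) (Fin m) ℂ,
        Function.Injective φ ∧ ∀ s t : M, φ (s * t) = φ s * φ t}
      = sInf {d : ℕ | ∃ X : Finset (M →* ℂ), X.card = d ∧
          Submonoid.closure (X : Set (M →* ℂ)) = ⊤} := by
  obtain ⟨N, hN1, hN⟩ := aux_exists_N hreg
  have hsepAll : ∀ a b : M, a ≠ b → ∃ χ : M →* ℂ, χ a ≠ χ b := fun a b hab =>
    aux_sep hN1 hN hab
  set L := {m : ℕ | ∃ φ : M → Matrix (Fin m) (Fin m) ℂ,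
      Function.Injective φ ∧ ∀ s t : M, φ (s * t) = φ s * φ t} with hL
  set R := {d : ℕ | ∃ X : Finset (M →* ℂ), X.card = d ∧
      Submonoid.closure (X : Set (M →* ℂ)) = ⊤} with hR
  have hLne : L.Nonempty := ⟨Fintype.card M, aux_regular⟩
  have key1 : ∀ m ∈ L, ∃ d ∈ R, d ≤ m := by
    rintro m ⟨φ, hinj, hmul⟩
    obtain ⟨X, hcard, hsep⟩ := aux_exists_sep_finset hN1 hN φ hinj hmul
    exact ⟨X.card, ⟨X, rfl, aux_closure_eq_top _ (fun a b hab => hsep a b hab)⟩, hcard⟩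
  have key2 : ∀ d ∈ R, d ∈ L := by
    rintro d ⟨X, rfl, hX⟩
    exact aux_diag hsepAll X hX
  have hRne : R.Nonempty := by
    obtain ⟨d, hd, _⟩ := key1 _ (Nat.sInf_mem hLne)
    exact ⟨d, hd⟩
  apply le_antisymm
  · exact Nat.sInf_le (key2 _ (Nat.sInf_mem hRne))
  · obtain ⟨d, hd, hdle⟩ := key1 _ (Nat.sInf_mem hLne)
    exact le_trans (Nat.sInf_le hd) hdle
end

section
/- Let G be a finite abelian group and let k be a field containing a primitive root of unity of order equal to the exponent of G (in particular the characteristic of k does not divide |G| and k is a splitting field for G). Then the effective dimension of G over k equals the minimal number of generators of G. -/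
open Module Polynomial

section Eig
variable {k V : Type*} [Field k] [AddCommGroup V] [Module k V]

lemma ker_aeval_prod_X_sub_C (u : Module.End k V) (s : Finset k) :
    LinearMap.ker (aeval u (∏ μ ∈ s, (X - C μ))) =
      ⨆ μ ∈ s, LinearMap.ker (aeval u (X - C μ)) := by
  classical
  induction s using Finset.induction_on with
  | empty => simp [Module.End.one_eq_id]
  | @insert a s ha ih =>
    have hcop : IsCoprime (X - C a) (∏ μ ∈ s, (X - C μ)) :=
      IsCoprime.prod_right fun b hb =>
        isCoprime_X_sub_C_of_isUnit_sub (sub_ne_zero_of_ne (fun h => ha (by rw [h]; exact hb))).isUnit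
    rw [Finset.prod_insert ha, ← sup_ker_aeval_eq_ker_aeval_mul_of_coprime u hcop, ih,
      Finset.iSup_insert]

lemma maxGen_sup_top {N : ℕ} [NeZero N] {ζ : k} (hζ : IsPrimitiveRoot ζ N)
    (u : Module.End k V) (hu : u ^ N = 1) :
    ⨆ μ, u.maxGenEigenspace μ = ⊤ := by
  have h0 : aeval u ((X : k[X]) ^ N - 1) = 0 := by
    simp [map_sub, map_pow, hu]
  have htop : LinearMap.ker (aeval u ((X : k[X]) ^ N - 1)) = ⊤ := by
    rw [h0]; exact LinearMap.ker_zero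
  rw [X_pow_sub_one_eq_prod (NeZero.pos N) hζ, ker_aeval_prod_X_sub_C] at htop
  rw [eq_top_iff, ← htop]
  refine iSup_le fun μ => iSup_le fun _ => ?_
  refine le_trans ?_ (le_iSup _ μ)
  intro x hx
  rw [LinearMap.mem_ker] at hx
  rw [Module.End.mem_maxGenEigenspace]
  refine ⟨1, ?_⟩
  simpa [Polynomial.aeval_X, map_sub, Module.algebraMap_end_eq_smul_id] using hx

lemma maxGen_eq_eigen {N : ℕ} [NeZero N] {ζ : k} (hζ : IsPrimitiveRoot ζ N)
    (u : Module.End k V) (hu : u ^ N = 1) (μ : k) :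
    u.maxGenEigenspace μ = u.eigenspace μ := by
  have hN0 : ((N : k)) ≠ 0 := (hζ.neZero').out
  have hsf : Squarefree ((X : k[X]) ^ N - 1) :=
    (Polynomial.X_pow_sub_one_separable_iff.mpr hN0).squarefree
  have hss : u.IsSemisimple :=
    Module.End.isSemisimple_of_squarefree_aeval_eq_zero hsf (by simp [map_sub, map_pow, hu])
  exact hss.isFinitelySemisimple.maxGenEigenspace_eq_eigenspace μ

end Eig


lemma smul_cancel_of_ne_zero {k W : Type*} [Field k] [AddCommGroup W] [Module k W]
    {a b : k} {v : W} (hv : v ≠ 0) (h : a • v = b • v) : a = b := by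
  by_contra hab
  have h2 : (a - b) • v = 0 := by rw [sub_smul, h, sub_self]
  rcases smul_eq_zero.mp h2 with h3 | h3
  · exact hab (sub_eq_zero.mp h3)
  · exact hv h3

lemma exists_generators_of_rep {G : Type*} [CommGroup G] [Fintype G]
    (k : Type*) [Field k] {ζ : k} (hζ : IsPrimitiveRoot ζ (Monoid.exponent G))
    [HasEnoughRootsOfUnity k (Monoid.exponent G)]
    {m : ℕ} (φ : G → Matrix (Fin m) (Fin m) k) (hinj : Function.Injective φ)
    (hmul : ∀ s t : G, φ (s * t) = φ s * φ t) :
    ∃ X : Finset G, Subgroup.closure (X : Set G) = ⊤ ∧ X.card ≤ m := by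
  classical
  haveI : NeZero (Monoid.exponent G) := ⟨Monoid.exponent_ne_zero_of_finite⟩
  -- Step 1 : pass to linear endomorphisms
  set T : G → Module.End k (Fin m → k) := fun g => Matrix.toLin' (φ g) with hT
  have hTmul : ∀ g h : G, T (g * h) = T g * T h := by
    intro g h
    show Matrix.toLin' (φ (g * h)) = Matrix.toLin' (φ g) * Matrix.toLin' (φ h)
    rw [hmul, Matrix.toLin'_mul]
    rfl
  have hTinj : Function.Injective T := fun g h hgh => hinj (Matrix.toLin'.injective hgh)
  set e : Module.End k (Fin m → k) := T 1 with he
  have heT : ∀ g, e * T g = T g := fun g => by rw [he, ← hTmul, one_mul]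
  have hTe : ∀ g, T g * e = T g := fun g => by rw [he, ← hTmul, mul_one]
  set W : Submodule k (Fin m → k) := LinearMap.range e with hW
  have hmem : ∀ (g : G) (x : Fin m → k), T g x ∈ W := by
    intro g x
    exact ⟨T g x, congrFun (congrArg DFunLike.coe (heT g)) x⟩
  have hmapsTo : ∀ g : G, Set.MapsTo (T g) (W : Set (Fin m → k)) W := fun g x _ => hmem g x
  set r : G → Module.End k W := fun g => LinearMap.restrict (T g) (hmapsTo g) with hr
  have hrval : ∀ (g : G) (x : W), ((r g x : W) : Fin m → k) = T g (x : Fin m → k) := by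
    intro g x; rfl
  have hr1 : r 1 = 1 := by
    apply LinearMap.ext
    rintro ⟨x, y, rfl⟩
    apply Subtype.ext
    show T 1 (e y) = e y
    have := congrFun (congrArg DFunLike.coe (heT 1)) y
    simpa [he] using this
  have hrmul : ∀ g h : G, r (g * h) = r g * r h := by
    intro g h
    apply LinearMap.ext
    intro x
    apply Subtype.ext
    show T (g * h) (x : Fin m → k) = T g (T h (x : Fin m → k))
    rw [hTmul]
    rfl
  have hrinj : Function.Injective r := by
    intro g h hgh
    apply hTinj
    apply LinearMap.ext
    intro v
    have h1 : T g v = T g (e v) := by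
      conv_lhs => rw [← hTe g]
      rfl
    have h2 : T h v = T h (e v) := by
      conv_lhs => rw [← hTe h]
      rfl
    have h3 : (r g ⟨e v, ⟨v, rfl⟩⟩ : W) = r h ⟨e v, ⟨v, rfl⟩⟩ := by rw [hgh]
    have h4 := congrArg (fun z : W => (z : Fin m → k)) h3
    simp only [hrval] at h4
    rw [h1, h2]
    exact h4
  -- the monoid hom
  set ρ : G →* Module.End k W := ⟨⟨r, hr1⟩, hrmul⟩ with hρ
  have hrpow : ∀ g : G, r g ^ Monoid.exponent G = 1 := by
    intro g
    have : r (g ^ Monoid.exponent G) = (r g) ^ Monoid.exponent G := map_pow ρ g _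
    rw [← this, Monoid.pow_exponent_eq_one, hr1]
  have hcomm : ∀ g h : G, Commute (r g) (r h) := by
    intro g h
    show r g * r h = r h * r g
    rw [← hrmul, ← hrmul, mul_comm]
  -- simultaneous eigenspaces
  have hsup : ∀ g : G, ⨆ μ, (r g).maxGenEigenspace μ = ⊤ := fun g =>
    maxGen_sup_top hζ (r g) (hrpow g)
  have joint : ⨆ χ : G → k, ⨅ g, (r g).maxGenEigenspace (χ g) = ⊤ :=
    Module.End.iSup_iInf_maxGenEigenspace_eq_top_of_iSup_maxGenEigenspace_eq_top_of_commute
      r (fun g h _ => hcomm g h) hsup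
  have indep : iSupIndep (fun χ : G → k => ⨅ g, (r g).maxGenEigenspace (χ g)) :=
    Module.End.independent_iInf_maxGenEigenspace_of_forall_mapsTo r
      (fun i j μ => Module.End.mapsTo_maxGenEigenspace_of_comm (hcomm j i) μ)
  have hME : ∀ (g : G) (μ : k), (r g).maxGenEigenspace μ = (r g).eigenspace μ := fun g μ =>
    maxGen_eq_eigen hζ (r g) (hrpow g) μ
  set J : (G → k) → Submodule k W := fun χ => ⨅ g, (r g).maxGenEigenspace (χ g) with hJ
  haveI : Fintype {χ : G → k // J χ ≠ ⊥} := indep.fintypeNeBotOfFiniteDimensional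
  have hcard : Fintype.card {χ : G → k // J χ ≠ ⊥} ≤ finrank k W :=
    indep.subtype_ne_bot_le_finrank
  have hWm : finrank k W ≤ m := by
    have := Submodule.finrank_le W
    simpa [Module.finrank_pi] using this
  -- each nonzero joint eigenspace gives a character
  have hvex : ∀ σ : {χ : G → k // J χ ≠ ⊥}, ∃ v : W, v ∈ J σ.1 ∧ v ≠ 0 := by
    intro σ
    obtain ⟨v, hv1, hv2⟩ := Submodule.exists_mem_ne_zero_of_ne_bot σ.2
    exact ⟨v, hv1, hv2⟩
  have heig : ∀ (σ : {χ : G → k // J χ ≠ ⊥}) (v : W), v ∈ J σ.1 → ∀ g : G,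
      r g v = σ.1 g • v := by
    intro σ v hv g
    have h1 : v ∈ (r g).maxGenEigenspace (σ.1 g) := (Submodule.mem_iInf _).mp hv g
    rw [hME] at h1
    exact Module.End.mem_eigenspace_iff.mp h1
  have hchar : ∀ σ : {χ : G → k // J χ ≠ ⊥},
      σ.1 1 = 1 ∧ ∀ g h : G, σ.1 (g * h) = σ.1 g * σ.1 h := by
    intro σ
    obtain ⟨v, hv, hv0⟩ := hvex σ
    constructor
    · have h1 : r 1 v = σ.1 1 • v := heig σ v hv 1
      rw [hr1] at h1
      refine smul_cancel_of_ne_zero hv0 ?_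
      rw [← h1, one_smul]
      rfl
    · intro g h
      have h1 : r (g * h) v = σ.1 (g * h) • v := heig σ v hv (g * h)
      have h2 : r (g * h) v = (σ.1 g * σ.1 h) • v := by
        rw [hrmul]
        show r g (r h v) = _
        rw [heig σ v hv h, map_smul, heig σ v hv g, smul_smul, mul_comm]
      exact smul_cancel_of_ne_zero hv0 (h1 ▸ h2 ▸ rfl)
  set c : {χ : G → k // J χ ≠ ⊥} → (G →* kˣ) := fun σ =>
    MonoidHom.toHomUnits ⟨⟨σ.1, (hchar σ).1⟩, fun g h => (hchar σ).2 g h⟩ with hc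
  have hcval : ∀ (σ : {χ : G → k // J χ ≠ ⊥}) (g : G), ((c σ g : kˣ) : k) = σ.1 g := by
    intro σ g; rfl
  -- separation
  have hsep : ∀ g : G, (∀ σ : {χ : G → k // J χ ≠ ⊥}, σ.1 g = 1) → g = 1 := by
    intro g hg
    apply hrinj
    rw [hr1]
    have hker : ∀ χ : G → k, J χ ≤ (r g).eigenspace 1 := by
      intro χ
      by_cases hb : J χ = ⊥
      · rw [hb]; exact bot_le
      · have hχg : χ g = 1 := hg ⟨χ, hb⟩
        have h1 : J χ ≤ (r g).maxGenEigenspace (χ g) := iInf_le _ g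
        rw [hME, hχg] at h1
        exact h1
    have htop : ∀ x : W, x ∈ (r g).eigenspace 1 := by
      have h2 : (⊤ : Submodule k W) ≤ (r g).eigenspace 1 := by
        rw [← joint]
        exact iSup_le hker
      intro x
      exact h2 Submodule.mem_top
    apply LinearMap.ext
    intro x
    have h3 := Module.End.mem_eigenspace_iff.mp (htop x)
    rw [h3, one_smul]
    rfl
  -- duality : the characters generate the dual group, by cardinality
  obtain ⟨ε⟩ := CommGroup.monoidHom_mulEquiv_of_hasEnoughRootsOfUnity G k
  haveI : Finite (G →* kˣ) := Finite.of_equiv G ε.toEquiv.symm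
  set Sc : Finset (G →* kˣ) := Finset.univ.image c with hSc
  set H : Subgroup (G →* kˣ) := Subgroup.closure (Sc : Set (G →* kˣ)) with hH
  have hexpH : Monoid.exponent H ∣ Monoid.exponent G := by
    calc Monoid.exponent H ∣ Monoid.exponent (G →* kˣ) :=
          Monoid.exponent_dvd_of_monoidHom H.subtype H.subtype_injective
      _ = Monoid.exponent G := Monoid.exponent_eq_of_mulEquiv ε
  haveI : HasEnoughRootsOfUnity k (Monoid.exponent H) :=
    HasEnoughRootsOfUnity.of_dvd k hexpH
  obtain ⟨εH⟩ := CommGroup.monoidHom_mulEquiv_of_hasEnoughRootsOfUnity H k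
  haveI : Finite (H →* kˣ) := Finite.of_equiv H εH.toEquiv.symm
  set ev : G →* (H →* kˣ) := (MonoidHom.compHom' H.subtype).comp MonoidHom.eval with hev
  have hevinj : Function.Injective ev := by
    rw [injective_iff_map_eq_one]
    intro g hg
    apply hsep
    intro σ
    have hmemH : c σ ∈ H := Subgroup.subset_closure (by
      simp only [hSc, Finset.coe_image, Set.mem_image, Finset.mem_coe]
      exact ⟨σ, by simp, rfl⟩)
    have := congrArg (fun f : H →* kˣ => f ⟨c σ, hmemH⟩) hg
    have h1 : (c σ) g = 1 := this
    rw [← hcval σ g, h1]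
    rfl
  have hcards : Nat.card G ≤ Nat.card H := by
    calc Nat.card G ≤ Nat.card (H →* kˣ) := Nat.card_le_card_of_injective ev hevinj
      _ = Nat.card H := Nat.card_congr εH.toEquiv
  have hHtop : H = ⊤ := by
    apply Subgroup.eq_top_of_card_eq
    have h1 : Nat.card H ≤ Nat.card (G →* kˣ) :=
      Nat.card_le_card_of_injective H.subtype H.subtype_injective
    have h2 : Nat.card (G →* kˣ) = Nat.card G := Nat.card_congr ε.toEquiv
    omega
  -- transport generators to G
  refine ⟨Sc.image ε, ?_, ?_⟩
  · have hcoe : (⇑ε '' (Sc : Set (G →* kˣ))) = ⇑ε.toMonoidHom '' (Sc : Set (G →* kˣ)) := rfl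
    rw [Finset.coe_image, hcoe, ← MonoidHom.map_closure, ← hH, hHtop,
      Subgroup.map_top_of_surjective _ ε.surjective]
  · calc (Sc.image ε).card ≤ Sc.card := Finset.card_image_le
      _ ≤ Fintype.card {χ : G → k // J χ ≠ ⊥} := by
          simpa [hSc] using Finset.card_image_le (s := Finset.univ) (f := c)
      _ ≤ finrank k W := hcard
      _ ≤ m := hWm

lemma exists_rep_of_generators {G : Type*} [CommGroup G] [Fintype G]
    (k : Type*) [Field k] [HasEnoughRootsOfUnity k (Monoid.exponent G)]
    {X : Finset G} (hX : Subgroup.closure (X : Set G) = ⊤) :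
    ∃ φ : G → Matrix (Fin X.card) (Fin X.card) k,
      Function.Injective φ ∧ ∀ s t : G, φ (s * t) = φ s * φ t := by
  classical
  obtain ⟨ε⟩ := CommGroup.monoidHom_mulEquiv_of_hasEnoughRootsOfUnity G k
  set Y : Finset (G →* kˣ) := X.image ε.symm with hY
  have hYcard : Y.card = X.card := Finset.card_image_of_injective _ ε.symm.injective
  have hYclos : Subgroup.closure (Y : Set (G →* kˣ)) = ⊤ := by
    have hcoe : (⇑ε.symm '' (X : Set G)) = ⇑ε.symm.toMonoidHom '' (X : Set G) := rfl
    rw [hY, Finset.coe_image, hcoe, ← MonoidHom.map_closure, hX,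
      Subgroup.map_top_of_surjective _ ε.symm.surjective]
  set eqv : Fin X.card ≃ {χ // χ ∈ Y} := (Y.equivFin.trans (finCongr hYcard)).symm with heqv
  refine ⟨fun g => Matrix.diagonal (fun j => (((eqv j).1 g : kˣ) : k)), ?_, ?_⟩
  · intro g h hgh
    have hentry : ∀ χ : G →* kˣ, χ ∈ Y → χ g = χ h := by
      intro χ hχ
      have h1 := congrFun (congrFun hgh (eqv.symm ⟨χ, hχ⟩)) (eqv.symm ⟨χ, hχ⟩)
      simp only [Matrix.diagonal_apply_eq, Equiv.apply_symm_apply] at h1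
      exact Units.ext h1
    have hall : ∀ χ : G →* kˣ, χ (g * h⁻¹) = 1 := by
      intro χ
      have hmem : χ ∈ Subgroup.closure (Y : Set (G →* kˣ)) := by
        rw [hYclos]; exact Subgroup.mem_top χ
      refine Subgroup.closure_induction ?_ ?_ ?_ ?_ hmem
      · intro ψ hψ
        have := hentry ψ hψ
        rw [map_mul, map_inv, this, mul_inv_cancel]
      · rfl
      · intro ψ₁ ψ₂ _ _ h1 h2
        rw [MonoidHom.mul_apply, h1, h2, mul_one]
      · intro ψ _ h1
        rw [MonoidHom.inv_apply, h1, inv_one]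
    by_contra hne
    have hne1 : g * h⁻¹ ≠ 1 := fun hc => hne (by
      have := mul_inv_eq_one.mp hc
      exact this)
    obtain ⟨χ, hχ⟩ := CommGroup.exists_apply_ne_one_of_hasEnoughRootsOfUnity G k hne1
    exact hχ (hall χ)
  · intro s t
    have hfun : (fun j => (((eqv j).1 (s * t) : kˣ) : k))
        = fun j => (((eqv j).1 s : kˣ) : k) * (((eqv j).1 t : kˣ) : k) := by
      funext j
      rw [map_mul, Units.val_mul]
    show Matrix.diagonal _ = _
    rw [Matrix.diagonal_mul_diagonal, hfun]




/-- If `G` is a finite abelian group and `k` is a field containing a primitive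
root of unity of order the exponent of `G`, then the effective dimension of `G`
over `k` equals the minimal number of generators of `G`. -/
theorem effDim_finite_abelian_group_eq_min_generators
    {G : Type*} [CommGroup G] [Fintype G]
    (k : Type*) [Field k]
    (hζ : ∃ ζ : k, IsPrimitiveRoot ζ (Monoid.exponent G)) :
    sInf {m : ℕ | ∃ φ : G → Matrix (Fin m) (Fin m) k,
        Function.Injective φ ∧ ∀ s t : G, φ (s * t) = φ s * φ t}
      = sInf {d : ℕ | ∃ X : Finset G, X.card = d ∧
          Subgroup.closure (X : Set G) = ⊤} := by

  classical
  obtain ⟨ζ, hζ⟩ := hζ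
  haveI : NeZero (Monoid.exponent G) := ⟨Monoid.exponent_ne_zero_of_finite⟩
  haveI : HasEnoughRootsOfUnity k (Monoid.exponent G) := ⟨⟨ζ, hζ⟩, inferInstance⟩
  set L := {m : ℕ | ∃ φ : G → Matrix (Fin m) (Fin m) k,
      Function.Injective φ ∧ ∀ s t : G, φ (s * t) = φ s * φ t} with hL
  set R := {d : ℕ | ∃ X : Finset G, X.card = d ∧
      Subgroup.closure (X : Set G) = ⊤} with hR
  have hsub : R ⊆ L := by
    rintro d ⟨X, rfl, hclos⟩
    exact exists_rep_of_generators k hclos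
  have hRne : R.Nonempty := ⟨(Finset.univ : Finset G).card, Finset.univ, rfl, by
    rw [Finset.coe_univ, Subgroup.closure_univ]⟩
  have hLne : L.Nonempty := ⟨sInf R, hsub (Nat.sInf_mem hRne)⟩
  refine le_antisymm (Nat.sInf_le (hsub (Nat.sInf_mem hRne))) ?_
  obtain ⟨φ, hφinj, hφmul⟩ := Nat.sInf_mem hLne
  obtain ⟨X, hclos, hle⟩ := exists_generators_of_rep k hζ φ hφinj hφmul
  exact le_trans (Nat.sInf_le ⟨X, rfl, hclos⟩) hle
end

section
/- Let L be a finite lattice, viewed as a commutative monoid under the meet operation ⊓ (with identity element ⊤). Then for any field k, the effective dimension of this monoid over k equals the number of join-irreducible elements of L, i.e. the number of elements a ∈ L such that a ≠ ⊥ and whenever a = b ⊔ c one has a = b or a = c. -/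
section Aux

variable {L : Type*} [Lattice L]

/-- Orthogonality computation: a multiplicative map out of a meet-semilattice into a ring
produces orthogonal differences. -/
theorem aux_orth {R : Type*} [Ring R] (E : L → R)
    (hE : ∀ a b : L, E (a ⊓ b) = E a * E b)
    {a b a' b' : L} (hb : b ≤ a) (hb' : b' ≤ a')
    (h : a ⊓ a' ≤ b ∨ a ⊓ a' ≤ b') :
    (E a - E b) * (E a' - E b') = 0 := by
  have expand : (E a - E b) * (E a' - E b')
      = E (a ⊓ a') - E (a ⊓ b') - E (b ⊓ a') + E (b ⊓ b') := by
    rw [hE, hE, hE, hE]; noncomm_ring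
  rcases h with h | h
  · have h1 : b ⊓ a' = a ⊓ a' :=
      le_antisymm (inf_le_inf_right _ hb) (le_inf h inf_le_right)
    have h2 : b ⊓ b' = a ⊓ b' :=
      le_antisymm (inf_le_inf_right _ hb)
        (le_inf (le_trans (inf_le_inf_left _ hb') h) inf_le_right)
    rw [expand, h1, h2]; abel
  · have h1 : a ⊓ b' = a ⊓ a' :=
      le_antisymm (inf_le_inf_left _ hb') (le_inf inf_le_left h)
    have h2 : b ⊓ b' = b ⊓ a' :=
      le_antisymm (inf_le_inf_left _ hb')
        (le_inf inf_le_left (le_trans (inf_le_inf_right _ hb) h))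
    rw [expand, h1, h2]; abel

end Aux

/-- Let `L` be a finite lattice viewed as a commutative monoid under the meet
operation (with identity `⊤`).  For any field `k`, the effective dimension of
this monoid over `k` is the number of join-irreducible elements of `L`. -/
theorem effDim_finite_lattice_meet_eq_card_joinIrreducible
    {L : Type*} [Lattice L] [Fintype L] [BoundedOrder L]
    (k : Type*) [Field k] :
    IsLeast {m : ℕ | ∃ φ : L → Matrix (Fin m) (Fin m) k,
        Function.Injective φ ∧ ∀ a b : L, φ (a ⊓ b) = φ a * φ b}
      (Nat.card {a : L // a ≠ ⊥ ∧ ∀ b c : L, a = b ⊔ c → a = b ∨ a = c}) := by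
  classical
  set J := {a : L // a ≠ ⊥ ∧ ∀ b c : L, a = b ⊔ c → a = b ∨ a = c} with hJdef
  have hirr : ∀ j : J, SupIrred (j : L) := by
    rintro ⟨j, hjne, hj⟩
    refine ⟨fun hmin => hjne (by simpa [isMin_iff_eq_bot] using hmin), ?_⟩
    intro b c hbc
    rcases hj b c hbc.symm with h | h
    · exact Or.inl h.symm
    · exact Or.inr h.symm
  have hmem : ∀ a : L, SupIrred a → a ∈ {a : L | a ≠ ⊥ ∧ ∀ b c : L, a = b ⊔ c → a = b ∨ a = c} := by
    intro a ha
    refine ⟨ha.ne_bot, fun b c hbc => ?_⟩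
    rcases ha.2 hbc.symm with h | h
    · exact Or.inl h.symm
    · exact Or.inr h.symm
  set n := Nat.card J with hn
  have hcard : Fintype.card J = n := by rw [hn, Nat.card_eq_fintype_card]
  let e : J ≃ Fin n := Fintype.equivFinOfCardEq hcard
  -- key lattice fact: a is determined by the sup-irreducibles below it
  have key : ∀ a b : L, (∀ j : J, (j : L) ≤ a ↔ (j : L) ≤ b) → a = b := by
    have le_of : ∀ a b : L, (∀ j : J, (j : L) ≤ a → (j : L) ≤ b) → a ≤ b := by
      intro a b h
      obtain ⟨s, hs, hsi⟩ := exists_supIrred_decomposition a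
      rw [← hs]
      refine Finset.sup_le fun x hx => ?_
      have hxa : x ≤ a := hs ▸ Finset.le_sup (f := id) hx
      exact h ⟨x, hmem x (hsi hx)⟩ hxa
    intro a b h
    exact le_antisymm (le_of a b fun j hj => (h j).1 hj) (le_of b a fun j hj => (h j).2 hj)
  constructor
  · -- membership: the diagonal representation
    refine ⟨fun a => Matrix.diagonal (fun i => if ((e.symm i : L) ≤ a) then (1 : k) else 0),
      ?_, ?_⟩
    · intro a b hab
      refine key a b fun j => ?_
      have := congrFun (congrFun hab (e j)) (e j)
      simp only [Matrix.diagonal_apply_eq, Equiv.symm_apply_apply] at this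
      constructor
      · intro h1
        by_contra h2
        rw [if_pos h1, if_neg h2] at this
        exact one_ne_zero this
      · intro h2
        by_contra h1
        rw [if_neg h1, if_pos h2] at this
        exact zero_ne_one this
    · intro a b
      rw [Matrix.diagonal_mul_diagonal]
      have hfun : (fun i => if ((e.symm i : L) ≤ a ⊓ b) then (1 : k) else 0)
          = fun i => (if ((e.symm i : L) ≤ a) then (1 : k) else 0) *
              (if ((e.symm i : L) ≤ b) then (1 : k) else 0) := by
        funext i
        by_cases h1 : (e.symm i : L) ≤ a <;> by_cases h2 : (e.symm i : L) ≤ b <;>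
          simp [le_inf_iff, h1, h2]
      exact congrArg Matrix.diagonal hfun
  · -- lower bound
    rintro m ⟨φ, hinj, hmul⟩
    -- for each sup-irreducible j, the "lower cover" jstar
    let jstar : J → L := fun j => (Finset.univ.filter (· < (j : L))).sup id
    have hstar_le : ∀ j : J, jstar j ≤ (j : L) := by
      intro j
      exact Finset.sup_le fun b hb => (Finset.mem_filter.1 hb).2.le
    have hlt_le_star : ∀ (j : J) (b : L), b < (j : L) → b ≤ jstar j := by
      intro j b hb
      exact Finset.le_sup (f := id) (Finset.mem_filter.2 ⟨Finset.mem_univ _, hb⟩)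
    have hstar_ne : ∀ j : J, jstar j ≠ (j : L) := by
      intro j h
      obtain ⟨b, hb, hbj⟩ := (hirr j).finset_sup_eq h
      exact absurd hbj (Finset.mem_filter.1 hb).2.ne
    -- the orthogonal idempotents
    let F : J → Matrix (Fin m) (Fin m) k := fun j => φ (j : L) - φ (jstar j)
    have hFne : ∀ j : J, F j ≠ 0 := by
      intro j h
      exact hstar_ne j (hinj (sub_eq_zero.1 h).symm)
    have hFF : ∀ j : J, F j * F j = F j := by
      intro j
      have h1 : ((j : L) ⊓ (j : L)) = (j : L) := inf_idem _
      have h2 : ((j : L) ⊓ jstar j) = jstar j := inf_eq_right.2 (hstar_le j)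
      have h3 : (jstar j ⊓ (j : L)) = jstar j := inf_eq_left.2 (hstar_le j)
      have h4 : (jstar j ⊓ jstar j) = jstar j := inf_idem _
      have := hmul
      show (φ (j : L) - φ (jstar j)) * (φ (j : L) - φ (jstar j)) = φ (j : L) - φ (jstar j)
      have e1 := (hmul (j : L) (j : L)); rw [h1] at e1
      have e2 := (hmul (j : L) (jstar j)); rw [h2] at e2
      have e3 := (hmul (jstar j) (j : L)); rw [h3] at e3
      have e4 := (hmul (jstar j) (jstar j)); rw [h4] at e4
      calc (φ (j : L) - φ (jstar j)) * (φ (j : L) - φ (jstar j))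
          = φ (j : L) * φ (j : L) - φ (j : L) * φ (jstar j)
            - φ (jstar j) * φ (j : L) + φ (jstar j) * φ (jstar j) := by noncomm_ring
        _ = φ (j : L) - φ (jstar j) := by rw [← e1, ← e2, ← e3, ← e4]; abel
    have hForth : ∀ j j' : J, j ≠ j' → F j * F j' = 0 := by
      intro j j' hne
      refine aux_orth φ (fun a b => hmul a b) (hstar_le j) (hstar_le j') ?_
      rcases lt_or_eq_of_le (inf_le_left : (j : L) ⊓ (j' : L) ≤ (j : L)) with h | h
      · exact Or.inl (hlt_le_star j _ h)
      · -- j ≤ j', and j ≠ j' so j < j'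
        have hle : (j : L) ≤ (j' : L) := h ▸ inf_le_right
        have hlt : (j : L) < (j' : L) :=
          lt_of_le_of_ne hle (fun hh => hne (Subtype.ext hh))
        exact Or.inr (h.symm ▸ hlt_le_star j' _ (h ▸ hlt))
    -- pick vectors
    have hvec : ∀ j : J, ∃ x : Fin m → k, Matrix.mulVec (F j) x ≠ 0 := by
      intro j
      by_contra h
      push_neg at h
      apply hFne j
      ext i l
      have := congrFun (h (Pi.single l 1)) i
      simpa using this
    choose x hx using hvec
    let v : J → (Fin m → k) := fun j => Matrix.mulVec (F j) (x j)
    have hli : LinearIndependent k v := by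
      rw [Fintype.linearIndependent_iff]
      intro g hg i
      have happ : ∑ j, g j • Matrix.mulVec (F i) (v j) = 0 := by
        have h0 := congrArg (fun w => (Matrix.mulVecLin (F i)) w) hg
        simpa [map_sum, Matrix.mulVecLin_apply] using h0
      have hterm : ∀ j ∈ Finset.univ, j ≠ i → g j • Matrix.mulVec (F i) (v j) = 0 := by
        intro j _ hj
        have hz : Matrix.mulVec (F i) (v j) = 0 := by
          show Matrix.mulVec (F i) (Matrix.mulVec (F j) (x j)) = 0
          rw [Matrix.mulVec_mulVec, hForth i j (Ne.symm hj), Matrix.zero_mulVec]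
        rw [hz, smul_zero]
      rw [Finset.sum_eq_single i hterm (fun h => absurd (Finset.mem_univ i) h)] at happ
      have hvv : Matrix.mulVec (F i) (v i) = v i := by
        show Matrix.mulVec (F i) (Matrix.mulVec (F i) (x i)) = v i
        rw [Matrix.mulVec_mulVec, hFF i]
      rw [hvv] at happ
      rcases smul_eq_zero.1 happ with h | h
      · exact h
      · exact absurd h (hx i)
    have := hli.fintype_card_le_finrank
    rw [hcard, Module.finrank_fin_fun] at this
    exact this
end

section
/- Let S be a finite semigroup containing a chain of idempotents of length n, i.e. distinct idempotents e₀, e₁, …, e_n ∈ S such that e_i·e_j = e_j·e_i = e_{min(i,j)} for all i, j. Then for any field k, the effective dimension of S over k is at least n. -/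
/-!
The images `pᵢ` of the `eᵢ` under an effective representation are distinct idempotent
endomorphisms of `kᵐ` with `pᵢ pⱼ = pⱼ pᵢ = p_{min i j}`. For `i < j` this gives
`range pᵢ ≤ range pⱼ`, and equality would make `pᵢ` fix `range pⱼ`, i.e. `pⱼ = pᵢ pⱼ = pᵢ`.
So the ranks of the `pᵢ` form a strictly increasing sequence of `n + 1` numbers in
`{0, …, m}`.
-/

open Module LinearMap

theorem LinearMap.range_lt_range_of_mul_eq {R M : Type*} [Ring R] [AddCommGroup M] [Module R M]
    {p q : Module.End R M} (hp : IsIdempotentElem p) (hpq : p * q = p) (hqp : q * p = p)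
    (hne : p ≠ q) : range p < range q := by
  refine lt_of_le_of_ne (hqp ▸ range_comp_le_range p q) fun hrange => hne ?_
  have hpq' : p * q = q := (hp.comp_eq_right_iff q).2 hrange.ge
  rw [← hpq, hpq']

theorem LinearMap.strictMono_range_of_mul_eq_min {R M : Type*} [Ring R] [AddCommGroup M]
    [Module R M] {n : ℕ} {p : Fin (n + 1) → Module.End R M} (hinj : Function.Injective p)
    (hmul : ∀ i j, p i * p j = p (min i j) ∧ p j * p i = p (min i j)) :
    StrictMono fun i => range (p i) := by
  intro i j hij
  have hidem : IsIdempotentElem (p i) := by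
    simpa only [min_self, IsIdempotentElem] using (hmul i i).1
  obtain ⟨hpij, hpji⟩ := hmul i j
  rw [min_eq_left hij.le] at hpij hpji
  exact range_lt_range_of_mul_eq hidem hpij hpji (hinj.ne hij.ne)

theorem Submodule.le_finrank_of_strictMono {K V : Type*} [DivisionRing K] [AddCommGroup V]
    [Module K V] [FiniteDimensional K V] {n : ℕ} {f : Fin (n + 1) → Submodule K V}
    (hf : StrictMono f) : n ≤ finrank K V := by
  have hrank : StrictMono fun i => finrank K (f i) := fun i j hij =>
    Submodule.finrank_lt_finrank_of_lt (hf hij)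
  let rank : Fin (n + 1) → Fin (finrank K V + 1) := fun i =>
    ⟨finrank K (f i), Nat.lt_succ_of_le (Submodule.finrank_le _)⟩
  simpa using Fintype.card_le_of_injective rank fun i j h => hrank.injective (Fin.mk.inj_iff.1 h)

theorem effDim_ge_of_chain_of_idempotents_general
    {S : Type*} [Semigroup S] (k : Type*) [Field k]
    (n : ℕ) (e : Fin (n + 1) → S) (he : Function.Injective e)
    (hmul : ∀ i j : Fin (n + 1), e i * e j = e (min i j) ∧ e j * e i = e (min i j))
    (m : ℕ) (φ : S → Matrix (Fin m) (Fin m) k)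
    (hinj : Function.Injective φ) (hhom : ∀ s t : S, φ (s * t) = φ s * φ t) :
    n ≤ m := by
  let p : Fin (n + 1) → Module.End k (Fin m → k) := fun i => Matrix.toLinAlgEquiv' (φ (e i))
  have hp_inj : Function.Injective p := Matrix.toLinAlgEquiv'.injective.comp (hinj.comp he)
  have hp_mul : ∀ i j, p i * p j = p (min i j) ∧ p j * p i = p (min i j) := fun i j => by
    simp only [p, ← map_mul, ← hhom, hmul i j, and_self]
  simpa using Submodule.le_finrank_of_strictMono (strictMono_range_of_mul_eq_min hp_inj hp_mul)

/-- If a finite semigroup `S` contains a chain of idempotents of length `n`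
(that is, `n + 1` distinct idempotents `e₀ < e₁ < ⋯ < e_n` with
`e_i * e_j = e_j * e_i = e_{min i j}`), then every effective representation of
`S` by `m × m` matrices over a field `k` satisfies `n ≤ m`; in particular the
effective dimension of `S` over `k` is at least `n`. -/
theorem effDim_ge_of_chain_of_idempotents
    {S : Type*} [Semigroup S] [Finite S] (k : Type*) [Field k]
    (n : ℕ) (e : Fin (n + 1) → S) (he : Function.Injective e)
    (hmul : ∀ i j : Fin (n + 1), e i * e j = e (min i j) ∧ e j * e i = e (min i j))
    (m : ℕ) (φ : S → Matrix (Fin m) (Fin m) k)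
    (hinj : Function.Injective φ) (hhom : ∀ s t : S, φ (s * t) = φ s * φ t) :
    n ≤ m :=
  effDim_ge_of_chain_of_idempotents_general k n e he hmul m φ hinj hhom
end

section
/- Bergman's Lemma: Let k be a field, M a monoid, and L a left ideal of the monoid algebra k[M] (a k[M]-submodule of the left regular module k[M]). Suppose there exist distinct elements s, t ∈ M such that the element s − t lies in L, the cyclic submodule N := k[M]·(s − t) is a simple module, and N is contained in every nonzero submodule of L (i.e. L has simple socle generated by s − t). Then for every k[M]-module V whose associated representation separates s and t (i.e. the actions of s and t on V differ), there is an injective k[M]-module homomorphism from L into V. -/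
/-- **Bergman's Lemma.**  Let `L` be a left ideal of the monoid algebra `k[M]`
whose socle is simple and generated by an element `s - t` with `s ≠ t` in `M`.
Then every `k[M]`-module `V` whose associated representation separates `s` and
`t` contains a copy of `L` as a submodule. -/
theorem bergman_lemma
    {k : Type*} [Field k] {M : Type*} [Monoid M]
    (L : Submodule (MonoidAlgebra k M) (MonoidAlgebra k M))
    (s t : M) (hst : s ≠ t)
    (hmem : (MonoidAlgebra.of k M s - MonoidAlgebra.of k M t) ∈ L)
    (hsimple : IsSimpleModule (MonoidAlgebra k M)
      (Submodule.span (MonoidAlgebra k M)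
        {MonoidAlgebra.of k M s - MonoidAlgebra.of k M t}))
    (hsocle : ∀ N : Submodule (MonoidAlgebra k M) (MonoidAlgebra k M),
      N ≤ L → N ≠ ⊥ →
        Submodule.span (MonoidAlgebra k M)
          {MonoidAlgebra.of k M s - MonoidAlgebra.of k M t} ≤ N)
    (V : Type*) [AddCommGroup V] [Module (MonoidAlgebra k M) V]
    (hsep : ∃ v : V, (MonoidAlgebra.of k M s) • v ≠ (MonoidAlgebra.of k M t) • v) :
    ∃ f : L →ₗ[MonoidAlgebra k M] V, Function.Injective f := by
  obtain ⟨v, hv⟩ := hsep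
  set e := MonoidAlgebra.of k M s - MonoidAlgebra.of k M t with he
  -- the map x ↦ x • v on the algebra
  let g : MonoidAlgebra k M →ₗ[MonoidAlgebra k M] V :=
    { toFun := fun x => x • v
      map_add' := fun x y => add_smul x y v
      map_smul' := fun c x => by simp [mul_smul] }
  refine ⟨g.comp L.subtype, ?_⟩
  rw [← LinearMap.ker_eq_bot]
  by_contra h
  set K := LinearMap.ker (g.comp L.subtype) with hK
  have hmapne : Submodule.map L.subtype K ≠ ⊥ := by
    intro h0
    apply h
    exact (Submodule.map_injective_of_injective L.injective_subtype) (by simpa using h0)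
  have hle : Submodule.map L.subtype K ≤ L := Submodule.map_subtype_le L K
  have hN := hsocle _ hle hmapne
  have heK : e ∈ Submodule.map L.subtype K :=
    hN (Submodule.mem_span_singleton_self e)
  obtain ⟨x, hx, hxe⟩ := heK
  have : g e = 0 := by rw [← hxe]; exact hx
  have : e • v = 0 := this
  rw [he, sub_smul] at this
  exact hv (sub_eq_zero.mp this)
end

section
/- Let n ≥ 2 and let S be a submonoid of the monoid T_n of all maps from an n-element set to itself (under composition) such that the group of units G of S (the permutations contained in S) acts doubly (2-)transitively on the n-element set, and such that S contains at least one non-bijective (singular) map. Let k be a field whose characteristic does not divide |G|. Then the effective dimension of S over k equals n; moreover, the natural n-dimensional representation of S (the linearization of the action of S on the n-element set) embeds as a submodule into every effective k[S]-module. -/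
/-!
A non-bijective map `f ∈ S` of minimal image size is constant: otherwise some unit `u` carries two
points of the image of `f` onto a pair identified by `f`, and `f * u * f` has a smaller image.
Translating by units, `S` contains every constant map `c x`. In an effective module pick `v` with
`c a • v ≠ c b • v`; the vectors `P x = c x • v` satisfy `s • P x = P (s x)`, so `e x ↦ P x` is
`S`-equivariant. Its kernel lies in the sum-zero hyperplane (apply a constant map) and is stable
under the unit group `G`. For a nonzero `l` in it with `l i ≠ 0`, double transitivity makes the sum
of the translates `l ∘ g` over `{g | g • a = i}` constant off `a`, hence a multiple of
`1 - n • e a`, nonzero because `|G|` is invertible in `k`. So the kernel would contain every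
`e a - e b`, contradicting `P a ≠ P b`. The natural representation is faithful, so the effective
dimension is exactly `n`.
-/

open Finset

theorem eq_smul_one_sub_card_smul_single {α k : Type*} [Fintype α] [DecidableEq α] [Field k]
    {v : α → k} {a : α} {c : k} (hv : ∀ t ≠ a, v t = c) (hsum : ∑ t, v t = 0) :
    v = c • (1 - (Fintype.card α : k) • Pi.single a 1) := by
  have hv' : v = fun t => c + (Pi.single a (v a - c) : α → k) t := by
    ext t
    rcases eq_or_ne t a with rfl | h
    · simp
    · simp [hv t h, h]
  have hva : v a = c - Fintype.card α * c := by
    rw [hv', sum_add_distrib, sum_const, sum_pi_single', if_pos (mem_univ a), card_univ,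
      nsmul_eq_mul] at hsum
    linear_combination hsum
  ext t
  rcases eq_or_ne t a with rfl | h
  · simp [hva, mul_sub, mul_comm]
  · simp [hv t h, h]

namespace MulAction

variable {G α k : Type*} [Group G] [Fintype G] [MulAction G α] [DecidableEq α] [Field k]

variable (G) in
def fiberSum (l : α → k) (a i : α) : α → k := fun t => ∑ g : G with g • a = i, l (g • t)

theorem fiberSum_mem {K : Submodule k (α → k)} (hK : ∀ g : G, ∀ l ∈ K, (fun t => l (g • t)) ∈ K)
    {l : α → k} (hl : l ∈ K) (a i : α) : fiberSum G l a i ∈ K := by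
  have : fiberSum G l a i = ∑ g : G with g • a = i, fun t => l (g • t) := by
    ext t
    simp [fiberSum, Finset.sum_apply]
  rw [this]
  exact K.sum_mem fun g _ => hK g l hl

theorem fiberSum_apply_eq_of_ne [IsMultiplyPretransitive G α 2] (l : α → k) (i : α)
    {a t t' : α} (ht : t ≠ a) (ht' : t' ≠ a) : fiberSum G l a i t = fiberSum G l a i t' := by
  obtain ⟨h, ha, ht⟩ := is_two_pretransitive_iff.1 ‹_› (Ne.symm ht) (Ne.symm ht')
  simp only [fiberSum, sum_filter]
  rw [← Equiv.sum_comp (Equiv.mulRight h)]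
  simp [mul_smul, ha, ht]

variable [Fintype α]

theorem card_mul_card_filter_smul_eq [IsPretransitive G α] (a i : α) :
    Fintype.card α * #{g : G | g • a = i} = Fintype.card G := by
  have hfiber (x : α) : #{g : G | g • a = x} = #{g : G | g • a = i} := by
    obtain ⟨h, rfl⟩ := exists_smul_eq G i x
    exact card_equiv (Equiv.mulLeft h⁻¹) (by simp [mul_smul, inv_smul_eq_iff])
  calc Fintype.card α * #{g : G | g • a = i} = ∑ x : α, #{g : G | g • a = x} := by
        simp [hfiber]
    _ = Fintype.card G := (card_eq_sum_card_fiberwise (by simp)).symm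

theorem card_mul_fiberSum_self [IsPretransitive G α] (l : α → k) (a i : α) :
    (Fintype.card α : k) * fiberSum G l a i a = Fintype.card G * l i := by
  have : fiberSum G l a i a = #{g : G | g • a = i} * l i := by
    rw [fiberSum, sum_congr rfl fun g hg => by rw [(mem_filter.1 hg).2], sum_const, nsmul_eq_mul]
  rw [this, ← mul_assoc, ← Nat.cast_mul, card_mul_card_filter_smul_eq]

theorem sum_fiberSum_eq_zero {l : α → k} (hl : ∑ t, l t = 0) (a i : α) :
    ∑ t, fiberSum G l a i t = 0 := by
  simp only [fiberSum]
  rw [sum_comm]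
  exact sum_eq_zero fun g _ => (Equiv.sum_comp (toPerm g) l).trans hl

theorem single_sub_single_mem [IsMultiplyPretransitive G α 2] (hG : (Fintype.card G : k) ≠ 0)
    {K : Submodule k (α → k)} (hK : ∀ g : G, ∀ l ∈ K, (fun t => l (g • t)) ∈ K)
    {l : α → k} (hlK : l ∈ K) (hsum : ∑ t, l t = 0) (hl : l ≠ 0) (a b : α) :
    Pi.single a 1 - Pi.single b 1 ∈ K := by
  rcases eq_or_ne a b with rfl | hab
  · simp
  have : IsPretransitive G α := isPretransitive_of_is_two_pretransitive
  obtain ⟨i, hi⟩ : ∃ i, l i ≠ 0 := Function.ne_iff.1 hl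
  set n : k := (Fintype.card α : k)
  have one_sub_mem (x y : α) (hxy : x ≠ y) : n ≠ 0 ∧ 1 - n • Pi.single x 1 ∈ K := by
    set v := fiberSum G l x i
    have hv : v = v y • (1 - n • Pi.single x 1) := eq_smul_one_sub_card_smul_single
      (fun t ht => fiberSum_apply_eq_of_ne l i ht hxy.symm) (sum_fiberSum_eq_zero hsum x i)
    have hvx : n * v x ≠ 0 := by
      rw [card_mul_fiberSum_self l x i]
      exact mul_ne_zero hG hi
    have hvy : v y ≠ 0 := by
      intro h0
      rw [hv, h0] at hvx
      simp at hvx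
    refine ⟨left_ne_zero_of_mul hvx, ?_⟩
    have hvK : v ∈ K := fiberSum_mem hK hlK x i
    rw [hv] at hvK
    exact (K.smul_mem_iff hvy).1 hvK
  obtain ⟨hn, ha⟩ := one_sub_mem a b hab
  have hK' := K.smul_mem n⁻¹ (K.sub_mem (one_sub_mem b a hab.symm).2 ha)
  rwa [sub_sub_sub_cancel_left, ← smul_sub, smul_smul, inv_mul_cancel₀ hn, one_smul] at hK'

end MulAction

instance {α : Type*} [Finite α] : Finite (Function.End α) := inferInstanceAs (Finite (α → α))

open Function MulAction

theorem card_image_comp_comp_lt {α : Type*} [Fintype α] [DecidableEq α] {f g : α → α} {x y : α}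
    (hx : x ∈ univ.image f) (hy : y ∈ univ.image f) (hxy : x ≠ y) (h : f (g x) = f (g y)) :
    #(univ.image (f ∘ g ∘ f)) < #(univ.image f) := by
  rw [show f ∘ g ∘ f = (f ∘ g) ∘ f from rfl, ← image_image]
  exact card_image_le.lt_of_ne fun he => hxy (card_image_iff (f := f ∘ g).1 he hx hy h)

namespace Submonoid

variable {α : Type*} [Fintype α] {S : Submonoid (Function.End α)}

theorem isUnit_iff_bijective {g : S} : IsUnit g ↔ Bijective (g : Function.End α) := by
  constructor
  · rintro ⟨u, rfl⟩
    refine bijective_iff_has_inverse.2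
      ⟨(((u⁻¹ : Sˣ) : S) : Function.End α), fun x => ?_, fun x => ?_⟩
    · exact congrFun (congrArg Subtype.val u.inv_mul) x
    · exact congrFun (congrArg Subtype.val u.mul_inv) x
  · intro hg
    exact IsLeftRegular.isUnit_of_finite fun s t h =>
      Subtype.ext <| funext fun x => hg.1 (congrFun (congrArg Subtype.val h) x)

theorem card_units_eq : Nat.card Sˣ = Nat.card {g : S // Bijective (g : Function.End α)} := by
  rw [← Nat.card_range_of_injective Units.val_injective]
  exact Nat.card_congr (Equiv.subtypeEquivRight fun _ => isUnit_iff_bijective)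

theorem isMultiplyPretransitive_units
    (hS : ∀ a b c d : α, a ≠ b → c ≠ d → ∃ g ∈ S, Bijective g ∧ g a = c ∧ g b = d) :
    IsMultiplyPretransitive Sˣ α 2 := by
  refine is_two_pretransitive_iff.2 fun hab hcd => ?_
  obtain ⟨g, hgS, hg, ha, hb⟩ := hS _ _ _ _ hab hcd
  exact ⟨(isUnit_iff_bijective.2 hg : IsUnit (⟨g, hgS⟩ : S)).unit, ha, hb⟩

variable [DecidableEq α] [IsMultiplyPretransitive Sˣ α 2]

theorem exists_const_mem {f : Function.End α} (hf : f ∈ S) (hsing : ¬Bijective f) :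
    ∃ c, (const α c : Function.End α) ∈ S := by
  induction hm : #(univ.image f) using Nat.strong_induction_on generalizing f with
  | _ m ih =>
  obtain ⟨a, b, hfab, hab⟩ := not_injective_iff.1 (mt Finite.injective_iff_bijective.1 hsing)
  rcases le_or_gt #(univ.image f) 1 with h1 | h1
  · refine ⟨f a, ?_⟩
    rwa [show (const α (f a) : Function.End α) = f from funext fun x => card_le_one.1 h1 _
      (mem_image_of_mem f (mem_univ a)) _ (mem_image_of_mem f (mem_univ x))]
  · obtain ⟨x, hx, y, hy, hxy⟩ := one_lt_card.1 h1
    obtain ⟨u, hux, huy⟩ := is_two_pretransitive_iff.1 ‹_› hxy hab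
    have hfu : f (u • x) = f (u • y) := by rw [hux, huy, hfab]
    refine ih _ (hm ▸ card_image_comp_comp_lt hx hy hxy hfu) (f := f * (u : S) * f)
      (mul_mem (mul_mem hf (u : S).2) hf) (fun hb => hab (hb.1 ?_)) rfl
    change f (u • f a) = f (u • f b)
    rw [hfab]

theorem const_mem {f : Function.End α} (hf : f ∈ S) (hsing : ¬Bijective f) (i : α) :
    (const α i : Function.End α) ∈ S := by
  obtain ⟨c, hc⟩ := exists_const_mem hf hsing
  have : IsPretransitive Sˣ α := isPretransitive_of_is_two_pretransitive
  obtain ⟨u, rfl⟩ := exists_smul_eq Sˣ c i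
  exact mul_mem (u : S).2 hc

end Submonoid

section Representation

variable {α k V : Type*} [Fintype α] [Field k] [AddCommGroup V] [Module k V]
  {S : Submonoid (Function.End α)}

theorem linearCombination_comp_smul (ρ : S →ₙ* Module.End k V) {P : α → V}
    (hP : ∀ (s : S) (x : α), ρ s (P x) = P ((s : Function.End α) x)) (u : Sˣ) (l : α → k) :
    Fintype.linearCombination k P (fun t => l (u • t)) =
      ρ ↑u⁻¹ (Fintype.linearCombination k P l) := by
  have hinv (y : α) : (((u⁻¹ : Sˣ) : S) : Function.End α) y = u⁻¹ • y := rfl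
  simp only [Fintype.linearCombination_apply, map_sum, map_smul, hP, hinv]
  conv_rhs => rw [← Equiv.sum_comp (toPerm u)]
  simp

variable [DecidableEq α] [IsMultiplyPretransitive Sˣ α 2]

theorem injective_linearCombination_of_equivariant (hG : (Nat.card Sˣ : k) ≠ 0)
    (hconst : ∀ i, (const α i : Function.End α) ∈ S) (ρ : S →ₙ* Module.End k V) {P : α → V}
    (hP : ∀ (s : S) (x : α), ρ s (P x) = P ((s : Function.End α) x)) {a b : α}
    (hab : P a ≠ P b) : Injective (Fintype.linearCombination k P) := by
  have : Fintype Sˣ := Fintype.ofFinite _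
  rw [Nat.card_eq_fintype_card] at hG
  set ψ := Fintype.linearCombination k P
  rw [← LinearMap.ker_eq_bot, Submodule.eq_bot_iff]
  intro l hl
  by_contra hl0
  have hsum : ∑ t, l t = 0 := by
    have ht (t : α) : (∑ x, l x) • P t = 0 := by
      have := congrArg (ρ ⟨const α t, hconst t⟩) (LinearMap.mem_ker.1 hl)
      simpa [ψ, Fintype.linearCombination_apply, hP, sum_smul] using this
    by_contra h
    exact hab (smul_right_injective V h ((ht a).trans (ht b).symm))
  have hK (u : Sˣ) (l : α → k) (hl : l ∈ LinearMap.ker ψ) :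
      (fun t => l (u • t)) ∈ LinearMap.ker ψ := by
    rw [LinearMap.mem_ker, linearCombination_comp_smul ρ hP, LinearMap.mem_ker.1 hl, map_zero]
  have := LinearMap.mem_ker.1 (single_sub_single_mem hG hK hl hsum hl0 a b)
  exact hab (sub_eq_zero.1 (by simpa [ψ] using this))

theorem exists_injective_equivariant [Nontrivial α] (hG : (Nat.card Sˣ : k) ≠ 0)
    (hconst : ∀ i, (const α i : Function.End α) ∈ S) (ρ : S →ₙ* Module.End k V)
    (hρ : Injective ρ) :
    ∃ ψ : (α → k) →ₗ[k] V, Injective ψ ∧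
      ∀ (f : S) (i : α), ρ f (ψ (Pi.single i 1)) = ψ (Pi.single ((f : Function.End α) i) 1) := by
  let c (x : α) : S := ⟨const α x, hconst x⟩
  obtain ⟨a, b, hab⟩ := exists_pair_ne α
  obtain ⟨v, hv⟩ : ∃ v, ρ (c a) v ≠ ρ (c b) v := by
    by_contra! h
    exact hab (congrFun (congrArg Subtype.val (hρ (LinearMap.ext h))) a)
  have hP (s : S) (x : α) : ρ s (ρ (c x) v) = ρ (c ((s : Function.End α) x)) v := by
    rw [← Module.End.mul_apply, ← map_mul]
    rfl
  exact ⟨_, injective_linearCombination_of_equivariant hG hconst ρ hP hv,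
    fun f i => by simp [hP]⟩

end Representation

section Linearization

variable (k α : Type*) [Field k] [Fintype α] [DecidableEq α]

def linearization : Function.End α →* Module.End k (α → k) where
  toFun f := Fintype.linearCombination k fun x => Pi.single (f x) 1
  map_one' := by ext; simp [Function.End.one_def]
  map_mul' f g := by ext; simp [show ∀ x, (f * g) x = f (g x) from fun _ => rfl]

theorem linearization_injective : Injective (linearization k α) := fun f g h => funext fun x => by
  by_contra hne
  simpa [linearization, hne] using congrFun (congrArg (· (Pi.single x 1)) h) (f x)

end Linearization

universe v

theorem effDim_doubly_transitive_with_singular_general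
    (n : ℕ) (S : Submonoid (Function.End (Fin n)))
    (hdt : ∀ a b c d : Fin n, a ≠ b → c ≠ d →
      ∃ g ∈ S, Function.Bijective g ∧ g a = c ∧ g b = d)
    (hsing : ∃ f ∈ S, ¬ Function.Bijective f)
    (k : Type*) [Field k]
    (hchar : ¬ (ringChar k ∣
      Nat.card {g : S // Function.Bijective (g.val : Fin n → Fin n)})) :
    IsLeast {m : ℕ | ∃ φ : S → Matrix (Fin m) (Fin m) k,
        Function.Injective φ ∧ ∀ s t : S, φ (s * t) = φ s * φ t} n
    ∧ ∀ (V : Type v) [AddCommGroup V] [Module k V]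
        (ρ : S →* Module.End k V), Function.Injective ρ →
        ∃ ψ : (Fin n → k) →ₗ[k] V, Function.Injective ψ ∧
          ∀ (f : S) (i : Fin n),
            ρ f (ψ (Pi.single i 1)) = ψ (Pi.single ((f : Function.End (Fin n)) i) 1) := by
  obtain ⟨f, hfS, hf⟩ := hsing
  have : Nontrivial (Fin n) :=
    not_subsingleton_iff_nontrivial.1 fun _ => hf (bijective_of_subsingleton f)
  have : IsMultiplyPretransitive Sˣ (Fin n) 2 := S.isMultiplyPretransitive_units hdt
  have hG : (Nat.card Sˣ : k) ≠ 0 := by rwa [S.card_units_eq, Ne, ringChar.spec]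
  have hconst := S.const_mem hfS hf
  refine ⟨⟨⟨fun s => LinearMap.toMatrix' (linearization k _ s), ?_, fun s t => ?_⟩, ?_⟩,
    fun V _ _ ρ hρ => exists_injective_equivariant hG hconst ρ.toMulHom hρ⟩
  · exact LinearMap.toMatrix'.injective.comp
      ((linearization_injective k _).comp Subtype.val_injective)
  · simp [LinearMap.toMatrix'_mul]
  · rintro m ⟨φ, hφ, hmul⟩
    obtain ⟨ψ, hψ, -⟩ := exists_injective_equivariant hG hconst
      ⟨fun s => Matrix.toLin' (φ s), fun s t => by rw [hmul, Matrix.toLin'_mul]; rfl⟩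
      (Matrix.toLin'.injective.comp hφ)
    simpa using LinearMap.finrank_le_finrank_of_injective hψ

/-- Let `S` be a submonoid of the full transformation monoid `T_n` (`n ≥ 2`)
whose group of units (the bijections lying in `S`) is doubly transitive, and
which contains at least one singular (non-bijective) map.  If the
characteristic of `k` does not divide the order of the group of units, then the
effective dimension of `S` over `k` is `n`, and moreover the natural
`n`-dimensional representation of `S` embeds as a submodule into every
effective `k[S]`-module. -/
theorem effDim_doubly_transitive_with_singular
    (n : ℕ) (hn : 2 ≤ n) (S : Submonoid (Function.End (Fin n)))
    (hdt : ∀ a b c d : Fin n, a ≠ b → c ≠ d →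
      ∃ g ∈ S, Function.Bijective g ∧ g a = c ∧ g b = d)
    (hsing : ∃ f ∈ S, ¬ Function.Bijective f)
    (k : Type*) [Field k]
    (hchar : ¬ (ringChar k ∣
      Nat.card {g : S // Function.Bijective (g.val : Fin n → Fin n)})) :
    IsLeast {m : ℕ | ∃ φ : S → Matrix (Fin m) (Fin m) k,
        Function.Injective φ ∧ ∀ s t : S, φ (s * t) = φ s * φ t} n
    ∧ ∀ (V : Type v) [AddCommGroup V] [Module k V]
        (ρ : S →* Module.End k V), Function.Injective ρ →
        ∃ ψ : (Fin n → k) →ₗ[k] V, Function.Injective ψ ∧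
          ∀ (f : S) (i : Fin n),
            ρ f (ψ (Pi.single i 1)) = ψ (Pi.single ((f : Function.End (Fin n)) i) 1) :=
  effDim_doubly_transitive_with_singular_general n S hdt hsing k hchar
end

section
/- Let n ≥ 2 and let k be a field whose characteristic does not divide n! (e.g. characteristic 0 or characteristic greater than n). Then the effective dimension over k of the full transformation monoid T_n of all maps from an n-element set to itself (under composition) equals n. -/
open Matrix

private lemma effDim_aux_mem (n : ℕ) (k : Type*) [Field k] :
    ∃ φ : Function.End (Fin n) → Matrix (Fin n) (Fin n) k,
      Function.Injective φ ∧
      ∀ s t : Function.End (Fin n), φ (s * t) = φ s * φ t := by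
  refine ⟨fun f => Matrix.of fun i j => if f j = i then (1 : k) else 0, ?_, ?_⟩
  · intro f g h
    funext j
    have h2 := congrFun (congrFun h (f j)) j
    by_cases hgf : g j = f j
    · exact hgf.symm
    · simp [hgf] at h2
  · intro s t
    ext i j
    rw [Matrix.mul_apply]
    have hcomp : (s * t) j = s (t j) := rfl
    rw [Finset.sum_eq_single (t j)]
    · simp [hcomp]
    · intro b _ hb
      simp [Ne.symm hb]
    · simp

/-- If `n ≥ 2` and the characteristic of the field `k` does not divide `n!`,
then the effective dimension over `k` of the full transformation monoid `T_n`
of all maps of an `n`-element set (under composition) equals `n`. -/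
theorem effDim_full_transformation_monoid
    (n : ℕ) (hn : 2 ≤ n) (k : Type*) [Field k]
    (hchar : ¬ (ringChar k ∣ Nat.factorial n)) :
    IsLeast {m : ℕ | ∃ φ : Function.End (Fin n) → Matrix (Fin m) (Fin m) k,
        Function.Injective φ ∧
        ∀ s t : Function.End (Fin n), φ (s * t) = φ s * φ t} n := by
  have hnk : (n : k) ≠ 0 := by
    intro h
    exact hchar ((ringChar.spec k n).mp h |>.trans
      (Nat.dvd_factorial (by omega) le_rfl))
  constructor
  · exact effDim_aux_mem n k
  · rintro m ⟨φ, hinj, hmul⟩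
    -- the constant maps
    set c : Fin n → Function.End (Fin n) := fun i => (fun _ => i) with hc
    have hcc : ∀ i j, c i * c j = c i := fun i j => rfl
    -- permutations, as elements of the transformation monoid
    set P : Equiv.Perm (Fin n) → Function.End (Fin n) := fun σ => ⇑σ with hP
    have hpc : ∀ (σ : Equiv.Perm (Fin n)) (i : Fin n), P σ * c i = c (σ i) :=
      fun σ i => rfl
    set L : Fin n → (Fin m → k) →ₗ[k] (Fin m → k) :=
      fun i => Matrix.toLin' (φ (c i)) with hL
    have hLcc : ∀ i j (x : Fin m → k), L i (L j x) = L i x := by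
      intro i j x
      rw [hL]
      rw [← Matrix.toLin'_mul_apply, ← hmul, hcc]
    have hLpc : ∀ (σ : Equiv.Perm (Fin n)) (i : Fin n) (x : Fin m → k),
        Matrix.toLin' (φ (P σ)) (L i x) = L (σ i) x := by
      intro σ i x
      rw [hL, ← Matrix.toLin'_mul_apply, ← hmul, hpc]
    set i0 : Fin n := ⟨0, by omega⟩
    set i1 : Fin n := ⟨1, by omega⟩
    have hi01 : i0 ≠ i1 := by simp [i0, i1, Fin.ext_iff]
    by_cases hind : ∃ x : Fin m → k, LinearIndependent k (fun i : Fin n => L i x)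
    · obtain ⟨x, hx⟩ := hind
      have := hx.fintype_card_le_finrank
      simpa [Module.finrank_fin_fun] using this
    · -- otherwise φ (c i0) = φ (c i1), contradicting injectivity
      push_neg at hind
      exfalso
      have key : ∀ x : Fin m → k, L i0 x = L i1 x := by
        intro x
        obtain ⟨g, hg0, i₀, hgi₀⟩ := Fintype.not_linearIndependent_iff.mp (hind x)
        by_cases h0 : L i0 x = 0
        · have h1 : L i1 x = L i1 (L i0 x) := (hLcc i1 i0 x).symm
          rw [h0, map_zero] at h1
          rw [h0, h1]
        · -- all L j x are nonzero
          have hne : ∀ j, L j x ≠ 0 := by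
            intro j hj
            apply h0
            have := hLcc i0 j x
            rw [hj, map_zero] at this
            exact this.symm
          -- the coefficients sum to zero
          have hsum : ∑ i, g i = 0 := by
            have h1 := congrArg (L i0) hg0
            rw [map_zero, map_sum] at h1
            simp_rw [LinearMap.map_smul, hLcc] at h1
            rw [← Finset.sum_smul] at h1
            exact (smul_eq_zero.mp h1).resolve_right (hne i0)
          -- g is not constant
          have hnc : ∃ i j, g i ≠ g j := by
            by_contra hcon
            push_neg at hcon
            have h2 : ∑ i, g i = (n : k) * g i₀ := by
              rw [Finset.sum_congr rfl (fun i _ => hcon i i₀)]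
              simp [mul_comm]
            rw [hsum] at h2
            exact hgi₀ ((mul_eq_zero.mp h2.symm).resolve_left hnk)
          obtain ⟨i, j, hgij⟩ := hnc
          have hij : i ≠ j := fun h => hgij (h ▸ rfl)
          -- applying the swap permutation to the relation
          have hswap : ∑ l, g l • L ((Equiv.swap i j) l) x = 0 := by
            have h1 := congrArg (Matrix.toLin' (φ (P (Equiv.swap i j)))) hg0
            rw [map_zero, map_sum] at h1
            simp_rw [LinearMap.map_smul, hLpc] at h1
            exact h1
          -- L i x = L j x
          have huij : L i x = L j x := by
            have hdiff : (g i - g j) • (L i x - L j x) = 0 := by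
              have e1 : (∑ l, g l • L l x) - ∑ l, g l • L ((Equiv.swap i j) l) x
                  = (g i - g j) • (L i x - L j x) := by
                rw [← Finset.sum_sub_distrib]
                rw [show (∑ l, (g l • L l x - g l • L ((Equiv.swap i j) l) x))
                    = ∑ l ∈ ({i, j} : Finset (Fin n)),
                      (g l • L l x - g l • L ((Equiv.swap i j) l) x) from ?_]
                · rw [Finset.sum_pair hij, Equiv.swap_apply_left, Equiv.swap_apply_right]
                  module
                · symm
                  apply Finset.sum_subset (Finset.subset_univ _)
                  intro l _ hl
                  simp only [Finset.mem_insert, Finset.mem_singleton, not_or] at hl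
                  rw [Equiv.swap_apply_of_ne_of_ne hl.1 hl.2, sub_self]
              rw [hg0, hswap, sub_zero] at e1
              exact e1.symm
            have h3 := (smul_eq_zero.mp hdiff).resolve_left (sub_ne_zero.mpr hgij)
            exact sub_eq_zero.mp h3
          -- transport to i0, i1 via a permutation sending i ↦ i0, j ↦ i1
          have hji : (Equiv.swap i i0) j ≠ i0 := by
            intro h
            exact hij (((Equiv.swap i i0).injective
              (h.trans (Equiv.swap_apply_left i i0).symm)).symm)
          set σ : Equiv.Perm (Fin n) :=
            (Equiv.swap i i0).trans (Equiv.swap ((Equiv.swap i i0) j) i1) with hσ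
          have hσi : σ i = i0 := by
            rw [hσ]
            simp only [Equiv.trans_apply, Equiv.swap_apply_left]
            exact Equiv.swap_apply_of_ne_of_ne (Ne.symm hji) hi01
          have hσj : σ j = i1 := by
            rw [hσ]
            simp only [Equiv.trans_apply, Equiv.swap_apply_left]
          calc L i0 x = L (σ i) x := by rw [hσi]
            _ = Matrix.toLin' (φ (P σ)) (L i x) := (hLpc σ i x).symm
            _ = Matrix.toLin' (φ (P σ)) (L j x) := by rw [huij]
            _ = L (σ j) x := hLpc σ j x
            _ = L i1 x := by rw [hσj]
      have hLeq : L i0 = L i1 := LinearMap.ext key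
      have hφ : φ (c i0) = φ (c i1) := by
        have h2 : Matrix.toLin' (φ (c i0)) = Matrix.toLin' (φ (c i1)) := hLeq
        exact Matrix.toLin'.injective h2
      exact hi01 (congrFun (hinj hφ) i0)
end

section
/- Let S be a finite nilpotent semigroup with zero element z (i.e. z·s = s·z = z for all s ∈ S, and there is n such that every product of n elements of S equals z). Let k be a field and let φ : S → Mat_{m×m}(k) be any map with φ(st) = φ(s)φ(t) for all s, t ∈ S and φ(z) = 0. Then φ is equivalent to a representation by strictly upper triangular matrices: there exists an invertible matrix P ∈ Mat_{m×m}(k) such that for every s ∈ S the matrix P⁻¹ φ(s) P has (i,j)-entry equal to 0 whenever j ≤ i. -/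
/-!
Let `V j` be the span of the images of all products `φ s₁ ⋯ φ s_j`. Then `φ s` maps `V j` into
`V (j + 1)`, and `V (n + 1) = 0` because every product of `n + 1` elements of `S` is `z` and
`φ z = 0`. Building a basis from the bottom of this chain upward, appending at each step a basis
of a complement of `V (j + 1)` in `V j`, each `φ s` sends every basis vector into the span of the
earlier ones, i.e. it is strictly upper triangular in that basis.
-/

open Submodule

section Triangular

variable {ι K M : Type*} [Field K] [AddCommGroup M] [Module K M]

def StrictlyUpperTriangularWrt (T : ι → Module.End K M) {d : ℕ} (v : Fin d → M) : Prop :=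
  ∀ i q, T i (v q) ∈ span K (v '' Set.Iio q)

lemma Fin.append_comp_finSumFinEquiv {α : Type*} {d e : ℕ} (v : Fin d → α) (w : Fin e → α) :
    Fin.append v w ∘ finSumFinEquiv = Sum.elim v w :=
  Fin.append_comp_sumElim

lemma linearIndependent_fin_append {d e : ℕ} {v : Fin d → M} {w : Fin e → M}
    (hv : LinearIndependent K v) (hw : LinearIndependent K w)
    (hvw : Disjoint (span K (Set.range v)) (span K (Set.range w))) :
    LinearIndependent K (Fin.append v w) :=
  (linearIndependent_equiv finSumFinEquiv).1 <| by
    rw [Fin.append_comp_finSumFinEquiv]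
    exact hv.sum_type hw hvw

lemma span_range_fin_append {d e : ℕ} (v : Fin d → M) (w : Fin e → M) :
    span K (Set.range (Fin.append v w)) = span K (Set.range v) ⊔ span K (Set.range w) := by
  rw [← EquivLike.range_comp _ finSumFinEquiv, Fin.append_comp_finSumFinEquiv, Set.Sum.elim_range,
    span_union]

lemma StrictlyUpperTriangularWrt.fin_append {T : ι → Module.End K M} {d e : ℕ}
    {v : Fin d → M} {w : Fin e → M} (hv : StrictlyUpperTriangularWrt T v)
    (hw : ∀ i r, T i (w r) ∈ span K (Set.range v)) :
    StrictlyUpperTriangularWrt T (Fin.append v w) := by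
  intro i q
  refine Fin.addCases (fun p => ?_) (fun r => ?_) q
  · rw [Fin.append_left]
    refine span_mono ?_ (hv i p)
    rintro _ ⟨p', hp', rfl⟩
    refine ⟨Fin.castAdd e p', ?_, Fin.append_left v w p'⟩
    simpa only [Set.mem_Iio, Fin.lt_def, Fin.val_castAdd] using hp'
  · rw [Fin.append_right]
    refine span_mono ?_ (hw i r)
    rintro _ ⟨p, rfl⟩
    refine ⟨Fin.castAdd e p, ?_, Fin.append_left v w p⟩
    rw [Set.mem_Iio, Fin.lt_def, Fin.val_castAdd, Fin.val_natAdd]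
    omega

variable [FiniteDimensional K M]

lemma StrictlyUpperTriangularWrt.exists_extend {T : ι → Module.End K M} {W W' : Submodule K M}
    (hWW' : W ≤ W') (hT : ∀ i, W'.map (T i) ≤ W) {d : ℕ} {v : Fin d → M}
    (hv : LinearIndependent K v) (hvW : span K (Set.range v) = W)
    (htri : StrictlyUpperTriangularWrt T v) :
    ∃ (d' : ℕ) (v' : Fin d' → M), LinearIndependent K v' ∧ span K (Set.range v') = W' ∧
      StrictlyUpperTriangularWrt T v' := by
  obtain ⟨D, hD⟩ := W.exists_isCompl
  set C := W' ⊓ D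
  have hWC : W ⊔ C = W' := by
    rw [sup_comm, inf_sup_assoc_of_le D hWW', sup_comm D, hD.sup_eq_top, inf_top_eq]
  let w : Fin (Module.finrank K C) → M := C.subtype ∘ Module.finBasis K C
  have hwC : span K (Set.range w) = C := by
    rw [Set.range_comp, ← map_span, (Module.finBasis K C).span_eq, Submodule.map_top,
      range_subtype]
  refine ⟨_, Fin.append v w, linearIndependent_fin_append hv ?_ ?_, ?_, htri.fin_append ?_⟩
  · exact (Module.finBasis K C).linearIndependent.map' C.subtype C.ker_subtype
  · rw [hvW, hwC]
    exact hD.disjoint.mono_right inf_le_right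
  · rw [span_range_fin_append, hvW, hwC, hWC]
  · intro i r
    rw [hvW]
    exact hT i (mem_map_of_mem (inf_le_left (b := D) (Module.finBasis K C r).2))

lemma exists_basis_strictlyUpperTriangularWrt_of_antitone {T : ι → Module.End K M}
    {V : ℕ → Submodule K M} (hV : Antitone V) (hV0 : V 0 = ⊤) {N : ℕ} (hVN : V N = ⊥)
    (hT : ∀ i j, (V j).map (T i) ≤ V (j + 1)) :
    ∃ (d : ℕ) (b : Module.Basis (Fin d) K M), StrictlyUpperTriangularWrt T b := by
  have hspan : ∀ j ≤ N, ∃ (d : ℕ) (v : Fin d → M), LinearIndependent K v ∧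
      span K (Set.range v) = V j ∧ StrictlyUpperTriangularWrt T v := by
    intro j hj
    induction hj using Nat.decreasingInduction with
    | self =>
      exact ⟨0, Fin.elim0, linearIndependent_empty_type, by simp [hVN], fun _ q => q.elim0⟩
    | of_succ j _ ih =>
      obtain ⟨d, v, hv, hvV, htri⟩ := ih
      exact htri.exists_extend (hV j.le_succ) (fun i => hT i j) hv hvV
  obtain ⟨d, v, hv, hvV, htri⟩ := hspan 0 (Nat.zero_le N)
  refine ⟨d, Module.Basis.mk hv (by rw [hvV, hV0]), ?_⟩
  rwa [Module.Basis.coe_mk]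

end Triangular

section WordRange

variable {ι K M : Type*} [Field K] [AddCommGroup M] [Module K M]

def wordRange (T : ι → Module.End K M) (j : ℕ) : Submodule K M :=
  ⨆ g : Fin j → ι, LinearMap.range (List.ofFn (T ∘ g)).prod

variable (T : ι → Module.End K M)

lemma wordRange_zero : wordRange T 0 = ⊤ := by
  simp [wordRange, Module.End.one_eq_id]

lemma wordRange_antitone : Antitone (wordRange T) := by
  refine antitone_nat_of_succ_le fun j => iSup_le fun g => ?_
  rw [List.ofFn_succ', List.prod_concat, Module.End.mul_eq_comp]
  exact (LinearMap.range_comp_le_range _ _).trans (le_iSup_of_le (g ∘ Fin.castSucc) le_rfl)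

lemma map_wordRange_le (i : ι) (j : ℕ) : (wordRange T j).map (T i) ≤ wordRange T (j + 1) := by
  rw [wordRange, Submodule.map_iSup]
  refine iSup_le fun g => le_iSup_of_le (Fin.cons i g) ?_
  rw [← LinearMap.range_comp, Fin.comp_cons, List.ofFn_cons, List.prod_cons,
    Module.End.mul_eq_comp]

lemma wordRange_eq_bot {N : ℕ} (hT : ∀ g : Fin N → ι, (List.ofFn (T ∘ g)).prod = 0) :
    wordRange T N = ⊥ := by
  simp [wordRange, hT]

end WordRange

theorem Module.End.exists_basis_strictlyUpperTriangularWrt {ι K M : Type*} [Field K]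
    [AddCommGroup M] [Module K M] [FiniteDimensional K M] (T : ι → Module.End K M) {N : ℕ}
    (hT : ∀ g : Fin N → ι, (List.ofFn (T ∘ g)).prod = 0) :
    ∃ (d : ℕ) (b : Module.Basis (Fin d) K M), StrictlyUpperTriangularWrt T b :=
  exists_basis_strictlyUpperTriangularWrt_of_antitone (wordRange_antitone T) (wordRange_zero T)
    (wordRange_eq_bot T hT) (map_wordRange_le T)

theorem Matrix.exists_isUnit_conj_eq_zero_of_strictlyUpperTriangularWrt {ι K : Type*} [Field K]
    {m : ℕ} (A : ι → Matrix (Fin m) (Fin m) K) (b : Module.Basis (Fin m) K (Fin m → K))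
    (hb : StrictlyUpperTriangularWrt (fun i => Matrix.toLin' (A i)) b) :
    ∃ P : Matrix (Fin m) (Fin m) K, IsUnit P ∧
      ∀ i, ∀ p q : Fin m, q ≤ p → (P⁻¹ * A i * P) p q = 0 := by
  set E := Pi.basisFun K (Fin m)
  have hinv : (E.toMatrix b)⁻¹ = b.toMatrix E :=
    Matrix.inv_eq_right_inv (E.toMatrix_mul_toMatrix_flip b)
  have := E.invertibleToMatrix b
  refine ⟨E.toMatrix b, isUnit_of_invertible _, fun i p q hqp => ?_⟩
  have hconj : (E.toMatrix b)⁻¹ * A i * E.toMatrix b =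
      LinearMap.toMatrix b b (Matrix.toLin' (A i)) := by
    rw [hinv, ← basis_toMatrix_mul_linearMap_toMatrix_mul_basis_toMatrix b E b E,
      LinearMap.toMatrix_eq_toMatrix', LinearMap.toMatrix'_toLin']
  rw [hconj, LinearMap.toMatrix_apply, ← Finsupp.notMem_support_iff]
  exact fun hp => not_lt.2 hqp (b.mem_span_image.1 (hb i q) hp)

lemma map_foldl_mul {S R : Type*} [Semigroup S] [Monoid R] {φ : S → R}
    (hφ : ∀ s t, φ (s * t) = φ s * φ t) (l : List S) (a : S) :
    φ (l.foldl (· * ·) a) = φ a * (l.map φ).prod := by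
  induction l generalizing a with
  | nil => simp
  | cons s l ih => rw [List.foldl_cons, ih, hφ, List.map_cons, List.prod_cons, mul_assoc]

theorem nilpotent_rep_strictly_upper_triangularizable_general
    {S : Type*} [Semigroup S] (z : S)
    (hnil : ∃ n : ℕ, ∀ f : Fin (n + 1) → S,
      (List.ofFn fun i : Fin n => f i.succ).foldl (· * ·) (f 0) = z)
    (k : Type*) [Field k] (m : ℕ) (φ : S → Matrix (Fin m) (Fin m) k)
    (hhom : ∀ s t : S, φ (s * t) = φ s * φ t) (hφz : φ z = 0) :
    ∃ P : Matrix (Fin m) (Fin m) k, IsUnit P ∧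
      ∀ s : S, ∀ i j : Fin m, j ≤ i → (P⁻¹ * φ s * P) i j = 0 := by
  obtain ⟨n, hn⟩ := hnil
  have hprod : ∀ f : Fin (n + 1) → S, (List.ofFn (φ ∘ f)).prod = 0 := fun f => by
    rw [← hφz, ← hn f, map_foldl_mul hhom, List.map_ofFn, List.ofFn_succ, List.prod_cons]
    rfl
  obtain ⟨d, b, hb⟩ := Module.End.exists_basis_strictlyUpperTriangularWrt
    (fun s => Matrix.toLin' (φ s)) fun f : Fin (n + 1) → S => by
      change (List.ofFn (Matrix.toLinAlgEquiv' ∘ (φ ∘ f))).prod = 0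
      rw [← List.map_ofFn, ← map_list_prod, hprod, map_zero]
  obtain rfl : d = m := by simpa using (Module.finrank_eq_card_basis b).symm
  exact Matrix.exists_isUnit_conj_eq_zero_of_strictlyUpperTriangularWrt φ b hb

/-- Every zero-preserving matrix representation of a finite nilpotent semigroup
is equivalent to a representation by strictly upper triangular matrices. -/
theorem nilpotent_rep_strictly_upper_triangularizable
    {S : Type*} [Semigroup S] [Finite S] (z : S)
    (hz : ∀ s : S, z * s = z ∧ s * z = z)
    (hnil : ∃ n : ℕ, ∀ f : Fin (n + 1) → S,
      (List.ofFn fun i : Fin n => f i.succ).foldl (· * ·) (f 0) = z)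
    (k : Type*) [Field k] (m : ℕ) (φ : S → Matrix (Fin m) (Fin m) k)
    (hhom : ∀ s t : S, φ (s * t) = φ s * φ t) (hφz : φ z = 0) :
    ∃ P : Matrix (Fin m) (Fin m) k, IsUnit P ∧
      ∀ s : S, ∀ i j : Fin m, j ≤ i → (P⁻¹ * φ s * P) i j = 0 :=
  nilpotent_rep_strictly_upper_triangularizable_general z hnil k m φ hhom hφz
end

section
/- Let m, n ≥ 2 and let R_{m,n} be the m×n rectangular band: the semigroup on the set {1,…,m} × {1,…,n} with multiplication (i,j)·(i',j') = (i,j'). Then for every field k the effective dimension of R_{m,n} over k is at least 3; moreover, if |k| ≥ max(m,n) then the effective dimension of R_{m,n} over k equals 3. -/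
/-- The `m × n` rectangular band: the semigroup on `{1,…,m} × {1,…,n}` with
multiplication `(i,j)·(i',j') = (i,j')`. -/
def RectBand (m n : ℕ) : Type := Fin m × Fin n

instance (m n : ℕ) : Mul (RectBand m n) :=
  ⟨fun a b => ((a : Fin m × Fin n).1, (b : Fin m × Fin n).2)⟩

/-! In a faithful representation `φ` put `e = φ(1,1)`, `p = e - φ(1,2)`, `q = e - φ(2,1)`.
The band relations give `e p = p`, `p e = 0`, `e q = 0`, `p q = 0`, so if `p z ≠ 0` and
`q x ≠ 0` then `q x, p z, z` are linearly independent: `p` kills the first two but not `z`,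
and `e` kills `q x` but fixes `p z`.

Conversely, if `vⱼ ⬝ uᵢ = 1` for all `i, j` then `(i, j) ↦ uᵢ vⱼᵀ` is multiplicative, and
`uᵢ = (1, f i, 0)`, `vⱼ = (1, 0, g j)` with `f`, `g` injective make it faithful in dimension 3. -/

open Module Matrix Function Cardinal

theorem Cardinal.nonempty_fin_embedding_of_natCast_le_mk {α : Type*} {n : ℕ}
    (h : (n : Cardinal) ≤ #α) : Nonempty (Fin n ↪ α) :=
  lift_mk_le'.mp (by simpa using h)

theorem Module.End.three_le_finrank_of_mul_eq {K V : Type*} [Field K] [AddCommGroup V]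
    [Module K V] [FiniteDimensional K V] {e p q : Module.End K V} (hep : e * p = p)
    (hpe : p * e = 0) (heq : e * q = 0) (hpq : p * q = 0) (hp : p ≠ 0) (hq : q ≠ 0) :
    3 ≤ finrank K V := by
  obtain ⟨z, hz⟩ : ∃ z, p z ≠ 0 := by
    by_contra! h
    exact hp (LinearMap.ext h)
  obtain ⟨x, hx⟩ : ∃ x, q x ≠ 0 := by
    by_contra! h
    exact hq (LinearMap.ext h)
  have hew : e (p z) = p z := LinearMap.congr_fun hep z
  have hey : e (q x) = 0 := LinearMap.congr_fun heq x
  have hpw : p (p z) = 0 := by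
    rw [← hew]
    exact LinearMap.congr_fun hpe (p z)
  have hpy : p (q x) = 0 := LinearMap.congr_fun hpq x
  have hind : LinearIndependent K ![q x, p z, z] := by
    rw [Fintype.linearIndependent_iff]
    intro c hc
    simp only [Fin.sum_univ_three, Matrix.cons_val_zero, Matrix.cons_val_one,
      Matrix.cons_val_two, Matrix.head_cons, Matrix.tail_cons] at hc
    have h2 : c 2 = 0 := by
      simpa [hpw, hpy, hz] using congr(p $hc)
    have h1 : c 1 = 0 := by
      simpa [h2, hew, hey, hz] using congr(e $hc)
    have h0 : c 0 = 0 := by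
      simpa [h1, h2, hx] using hc
    intro i
    fin_cases i <;> assumption
  simpa using hind.fintype_card_le_finrank

namespace RectBand

variable {m n : ℕ}

theorem three_le_finrank {K V : Type*} [Field K] [AddCommGroup V] [Module K V]
    [FiniteDimensional K V] (hm : 2 ≤ m) (hn : 2 ≤ n) (φ : RectBand m n → Module.End K V)
    (hφ : Injective φ) (hmul : ∀ s t, φ (s * t) = φ s * φ t) : 3 ≤ finrank K V := by
  let a : RectBand m n := (⟨0, by omega⟩, ⟨0, by omega⟩)
  let b : RectBand m n := (⟨0, by omega⟩, ⟨1, hn⟩)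
  let c : RectBand m n := (⟨1, hm⟩, ⟨0, by omega⟩)
  have hb : a ≠ b := fun h => by simpa [a, b, Fin.ext_iff] using congr(Prod.snd $h)
  have hc : a ≠ c := fun h => by simpa [a, c, Fin.ext_iff] using congr(Prod.fst $h)
  have haa : a * a = a := rfl
  have hab : a * b = b := rfl
  have hba : b * a = a := rfl
  have hac : a * c = a := rfl
  have hbc : b * c = a := rfl
  refine Module.End.three_le_finrank_of_mul_eq (e := φ a) (p := φ a - φ b) (q := φ a - φ c)
    ?_ ?_ ?_ ?_ (sub_ne_zero.mpr (hφ.ne hb)) (sub_ne_zero.mpr (hφ.ne hc)) <;>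
  simp [mul_sub, sub_mul, ← hmul, haa, hab, hba, hac, hbc]

theorem injective_vecMulVec {R ι : Type*} [CommSemiring R] [Fintype ι]
    {u : Fin m → ι → R} {v : Fin n → ι → R} (huv : ∀ i j, v j ⬝ᵥ u i = 1)
    (hu : Injective u) (hv : Injective v) :
    Injective fun s : RectBand m n => vecMulVec (u s.1) (v s.2) := by
  rintro ⟨i, j⟩ ⟨i', j'⟩ h
  have hi : u i = u i' := by simpa [vecMulVec_mulVec, huv] using congr($h *ᵥ u i)
  have hj : v j = v j' := by simpa [vecMul_vecMulVec, huv] using congr(v j ᵥ* $h)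
  exact Prod.ext (hu hi) (hv hj)

theorem map_mul_vecMulVec {R ι : Type*} [CommSemiring R] [Fintype ι]
    {u : Fin m → ι → R} {v : Fin n → ι → R} (huv : ∀ i j, v j ⬝ᵥ u i = 1)
    (s t : RectBand m n) :
    vecMulVec (u (s * t).1) (v (s * t).2) =
      vecMulVec (u s.1) (v s.2) * vecMulVec (u t.1) (v t.2) := by
  rw [vecMulVec_mul_vecMulVec, huv, one_smul]
  rfl

theorem exists_injective_mul_matrix_three {k : Type*} [Field k] (f : Fin m ↪ k)
    (g : Fin n ↪ k) : ∃ φ : RectBand m n → Matrix (Fin 3) (Fin 3) k,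
      Injective φ ∧ ∀ s t, φ (s * t) = φ s * φ t := by
  let u : Fin m → Fin 3 → k := fun i => ![1, f i, 0]
  let v : Fin n → Fin 3 → k := fun j => ![1, 0, g j]
  have huv : ∀ i j, v j ⬝ᵥ u i = 1 := by simp [u, v, dotProduct, Fin.sum_univ_three]
  have hu : Injective u := fun i i' h => f.injective (by simpa [u] using congr_fun h 1)
  have hv : Injective v := fun j j' h => g.injective (by simpa [v] using congr_fun h 2)
  exact ⟨_, injective_vecMulVec huv hu hv, map_mul_vecMulVec huv⟩

end RectBand

/-- For `m, n ≥ 2`, the effective dimension of the `m × n` rectangular band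
over any field `k` is at least `3`; moreover if `|k| ≥ max m n` then it equals
`3`. -/
theorem effDim_rectangular_band
    (m n : ℕ) (hm : 2 ≤ m) (hn : 2 ≤ n) (k : Type*) [Field k] :
    (∀ d ∈ {d : ℕ | ∃ φ : RectBand m n → Matrix (Fin d) (Fin d) k,
        Function.Injective φ ∧
        ∀ s t : RectBand m n, φ (s * t) = φ s * φ t}, 3 ≤ d)
    ∧ (((max m n : ℕ) : Cardinal) ≤ Cardinal.mk k →
        IsLeast {d : ℕ | ∃ φ : RectBand m n → Matrix (Fin d) (Fin d) k,
          Function.Injective φ ∧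
          ∀ s t : RectBand m n, φ (s * t) = φ s * φ t} 3) := by
  have lower : ∀ d ∈ {d : ℕ | ∃ φ : RectBand m n → Matrix (Fin d) (Fin d) k,
      Injective φ ∧ ∀ s t : RectBand m n, φ (s * t) = φ s * φ t}, 3 ≤ d := by
    rintro d ⟨φ, hφ, hmul⟩
    simpa using RectBand.three_le_finrank hm hn (Matrix.toLinAlgEquiv' ∘ φ)
      (Matrix.toLinAlgEquiv'.injective.comp hφ) (by simp [hmul])
  refine ⟨lower, fun hk => ⟨?_, lower⟩⟩
  obtain ⟨f⟩ := nonempty_fin_embedding_of_natCast_le_mk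
    ((Nat.cast_le.mpr (le_max_left m n)).trans hk)
  obtain ⟨g⟩ := nonempty_fin_embedding_of_natCast_le_mk
    ((Nat.cast_le.mpr (le_max_right m n)).trans hk)
  exact RectBand.exists_injective_mul_matrix_three f g
end
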